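/- arXiv:2304.03860 — 6 statements merged into one kernel-verified Lean document; each statement's English description precedes it below -/
import Mathlib

section
/- Let F be a cellular automaton of radius r ≥ 1. If x is an equicontinuity point of F, then the sequence of words (F^i(x)(−r,r))_{i≥0} is eventually periodic: there exist m ≥ 0 and p > 0 such that F^{i+p}(x)(−r,r) = F^i(x)(−r,r) for all i ≥ m. -/
open Function Set

/-- The configuration space `A^ℤ`. -/
abbrev Config (A : Type*) : Type _ := ℤ → A

/-- The shift map `σ(x)_i = x_{i+1}`. -/
def shift {A : Type*} (x : Config A) : Config A := fun i => x (i + 1)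

/-- A cellular automaton: a continuous self-map of `A^ℤ` commuting with the shift. -/
def IsCA {A : Type*} [TopologicalSpace A] (F : Config A → Config A) : Prop :=
  Continuous F ∧ F ∘ shift = shift ∘ F

/-- `F` has radius `r`: `F(x)_i` only depends on `x(i−r, i+r)`. -/
def HasRadius {A : Type*} (F : Config A → Config A) (r : ℕ) : Prop :=
  ∀ (x y : Config A) (i : ℤ),
    (∀ k : ℤ, i - r ≤ k → k ≤ i + r → x k = y k) → F x i = F y i

/-- `x` is an equicontinuity point of `F`: for every `m` there is `n` such that any `y`
agreeing with `x` on `(−n,n)` satisfies `F^k(y)(−m,m) = F^k(x)(−m,m)` for all `k ≥ 0`. -/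
def EquicontinuousPt {A : Type*} (F : Config A → Config A) (x : Config A) : Prop :=
  ∀ m : ℕ, ∃ n : ℕ, ∀ y : Config A,
    (∀ k : ℤ, -(n : ℤ) ≤ k → k ≤ (n : ℤ) → y k = x k) →
    ∀ (t : ℕ) (k : ℤ), -(m : ℤ) ≤ k → k ≤ (m : ℤ) → F^[t] y k = F^[t] x k

lemma shift_iterate {A : Type*} (y : Config A) (j : ℕ) (k : ℤ) :
    shift^[j] y k = y (k + j) := by
  induction j generalizing k with
  | zero => simp
  | succ j ih =>
    rw [Function.iterate_succ_apply', shift, ih]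
    congr 1
    push_cast
    ring

lemma F_shift_iterate {A : Type*} [TopologicalSpace A] {F : Config A → Config A}
    (hF : IsCA F) (y : Config A) (j : ℕ) (k : ℤ) :
    F y (k + j) = F (shift^[j] y) k := by
  induction j generalizing k with
  | zero => simp
  | succ j ih =>
    have hbase : ∀ (w : Config A) (k : ℤ), F (shift w) k = F w (k + 1) := by
      intro w k
      have := congrFun (congrFun hF.2 w) k
      simpa [Function.comp, shift] using this
    rw [Function.iterate_succ_apply', hbase]
    rw [← ih]
    congr 1
    push_cast
    ring

theorem central_words_eventually_periodic_at_equicontinuity_point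
    {A : Type} [Fintype A] [Nonempty A] [TopologicalSpace A] [DiscreteTopology A]
    (F : Config A → Config A) (hF : IsCA F) (r : ℕ) (hr : 1 ≤ r)
    (hrad : HasRadius F r) (x : Config A) (hx : EquicontinuousPt F x) :
    ∃ (m p : ℕ), 0 < p ∧ ∀ i : ℕ, m ≤ i →
      ∀ k : ℤ, -(r : ℤ) ≤ k → k ≤ (r : ℤ) → F^[i + p] x k = F^[i] x k := by
  obtain ⟨n, hn⟩ := hx r
  set Q : ℕ := 2 * n + 1 with hQdef
  set q : ℤ := (Q : ℤ) with hqdef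
  have hq0 : 0 < q := by simp [hqdef, hQdef]
  set z : Config A := fun k => x ((k + n) % q - n) with hzdef
  -- z agrees with x on [-n, n]
  have hzx : ∀ k : ℤ, -(n : ℤ) ≤ k → k ≤ (n : ℤ) → z k = x k := by
    intro k h1 h2
    have hmod : (k + n) % q = k + n := by
      apply Int.emod_eq_of_lt (by omega)
      simp only [hqdef, hQdef]; push_cast; omega
    simp [hzdef, hmod]
  -- z is q-periodic
  have hzper : ∀ k : ℤ, z (k + q) = z k := by
    intro k
    have : (k + q + n) % q = (k + n) % q := by
      have : k + q + n = (k + n) + 1 * q := by ring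
      rw [this, Int.add_mul_emod_self_right]
    simp [hzdef, this]
  -- each F^[i] z is q-periodic
  have hper : ∀ i : ℕ, ∀ k : ℤ, F^[i] z (k + q) = F^[i] z k := by
    intro i
    induction i with
    | zero => simpa using hzper
    | succ i ih =>
      intro k
      have hfix : shift^[Q] (F^[i] z) = F^[i] z := by
        funext k
        rw [shift_iterate, ← hqdef, ih]
      rw [Function.iterate_succ_apply']
      calc F (F^[i] z) (k + q) = F (shift^[Q] (F^[i] z)) k := F_shift_iterate hF _ Q k
        _ = F (F^[i] z) k := by rw [hfix]
  -- periodicity for all integer multiples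
  have hperm : ∀ (i : ℕ) (k : ℤ) (j : ℤ), F^[i] z (k + j * q) = F^[i] z k := by
    intro i k j
    induction j using Int.induction_on with
    | zero => simp
    | succ j ih =>
      have : k + (j + 1) * q = (k + j * q) + q := by ring
      rw [this, hper, ih]
    | pred j ih =>
      have : k + (-j) * q = (k + (-j - 1) * q) + q := by ring
      rw [← ih, this, hper]
  -- each F^[i] z is determined by its residues
  have hres : ∀ (i : ℕ) (k : ℤ), F^[i] z k = F^[i] z (k % q) := by
    intro i k
    have : k % q = k + (-(k / q)) * q := by
      have := Int.emod_add_mul_ediv k q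
      linarith
    rw [this, hperm]
  -- pigeonhole on the finite set of period-Q configurations
  set φ : ℕ → (Fin Q → A) := fun i j => F^[i] z (j : ℤ) with hφdef
  obtain ⟨a, b, hab, hfab⟩ := Finite.exists_ne_map_eq_of_infinite φ
  set s := min a b with hs
  set t := max a b with ht
  have hst : s < t := by omega
  have hφst : φ s = φ t := by
    rcases le_total a b with h | h
    · simp [hs, ht, min_eq_left h, max_eq_right h, hfab]
    · simp [hs, ht, min_eq_right h, max_eq_left h, hfab.symm]
  have hzst : F^[s] z = F^[t] z := by
    funext k
    have h0 : 0 ≤ k % q := Int.emod_nonneg k hq0.ne'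
    have h1 : k % q < q := Int.emod_lt_of_pos k hq0
    have hQlt : (k % q).toNat < Q := by
      have : ((k % q).toNat : ℤ) < (Q : ℤ) := by
        rw [Int.toNat_of_nonneg h0]; exact h1
      exact_mod_cast this
    have hj : ((⟨(k % q).toNat, hQlt⟩ : Fin Q) : ℤ) = k % q := by
      simp [Int.toNat_of_nonneg h0]
    have := congrFun hφst (⟨(k % q).toNat, hQlt⟩ : Fin Q)
    simp only [hφdef] at this
    rw [hres s k, hres t k, ← hj, this]
  -- eventual periodicity of the orbit of z
  refine ⟨s, t - s, by omega, ?_⟩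
  intro i hi k hk1 hk2
  have hzi : F^[i + (t - s)] z = F^[i] z := by
    have h1 : i + (t - s) = (i - s) + t := by omega
    have h2 : i = (i - s) + s := by omega
    rw [h1, Function.iterate_add_apply, ← hzst, ← Function.iterate_add_apply, ← h2]
  have e1 := hn z hzx (i + (t - s)) k hk1 hk2
  have e2 := hn z hzx i k hk1 hk2
  rw [← e1, ← e2, hzi]
end

section
/- Let F be a cellular automaton of radius r ≥ 1, let μ be a Borel probability measure on A^ℤ that is ergodic with respect to the shift σ, and let x ∈ A^ℤ be such that μ(B_{[−r,r]}(x)) > 0. Then B_{[−r,r]}(x) contains a spatially periodic configuration (i.e., a point fixed by some positive power of σ), and consequently the sequence of words (F^i(x)(−r,r))_{i≥0} is eventually periodic. -/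
open Function Set MeasureTheory Filter

/-- `B_{[i₁,i₂]}(x) = {y : F^j(y)(i₁,i₂) = F^j(x)(i₁,i₂) for all j ≥ 0}`. -/
def Bset {A : Type*} (F : Config A → Config A) (i₁ i₂ : ℤ) (x : Config A) :
    Set (Config A) :=
  {y | ∀ (j : ℕ) (k : ℤ), i₁ ≤ k → k ≤ i₂ → F^[j] y k = F^[j] x k}

/-!
By Poincaré recurrence some `y ∈ B = B_{[-r,r]}(x)` returns to `B` under a shift `σ^q` with
`q > 2r`, so every column `(F^j y)(k)` with `k ∈ [-r, r]` coincides with the column at `k + q`.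
Repeat `y(-r), …, y(q-r-1)` periodically to obtain `z`. By induction on `j`, `F^j z` and `F^j y`
agree on `[-r, q+r]`: radius `r` gives agreement on `[0, q]`, and since `F^j z` is `q`-periodic the
two margins of width `r` are recovered from the window `[-r, r]`, where the columns of `y` repeat
with period `q`. Hence `z ∈ B`. The orbit of `z` stays among the finitely many `q`-periodic
configurations, so it is eventually periodic, and so are the words of `x` on `[-r, r]`.
-/

theorem Function.Periodic.apply_toIcoMod {α β : Type*} [AddCommGroup α] [LinearOrder α]
    [IsOrderedAddMonoid α] [Archimedean α] {f : α → β} {p : α} (h : Periodic f p) (hp : 0 < p)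
    (a b : α) : f (toIcoMod hp a b) = f b := by
  have := h.sub_zsmul_eq (x := b) (toIcoDiv hp a b)
  rwa [← self_sub_toIcoMod, sub_sub_cancel] at this

theorem finite_setOf_periodic {A : Type*} [Finite A] {q : ℤ} (hq : 0 < q) :
    {u : ℤ → A | Periodic u q}.Finite := by
  refine Set.Finite.of_finite_image (f := fun u (k : Ico 0 q) => u k) (Set.toFinite _) ?_
  intro u hu v hv huv
  funext k
  have : u (toIcoMod hq 0 k) = v (toIcoMod hq 0 k) :=
    congrFun huv ⟨toIcoMod hq 0 k, toIcoMod_mem_Ico' hq k⟩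
  rwa [hu.apply_toIcoMod hq, hv.apply_toIcoMod hq] at this

theorem exists_iterate_add_eq_of_forall_mem {α : Type*} {f : α → α} {x : α} {s : Set α}
    (hs : s.Finite) (hx : ∀ n, f^[n] x ∈ s) :
    ∃ m p, 0 < p ∧ ∀ i, m ≤ i → f^[i + p] x = f^[i] x := by
  obtain ⟨a, b, hab, hfab⟩ := Finite.exists_lt_map_eq_of_forall_mem hx hs
  refine ⟨a, b - a, by omega, fun i hi => ?_⟩
  calc f^[i + (b - a)] x = f^[i - a] (f^[b] x) := by rw [← iterate_add_apply]; congr 1; omega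
    _ = f^[i - a] (f^[a] x) := by rw [hfab]
    _ = f^[i] x := by rw [← iterate_add_apply]; congr 1; omega

theorem Function.Periodic.eqOn_Icc_of_eqOn_Ico {A : Type*} {u v : ℤ → A} {q r c : ℤ}
    (hu : Periodic u q) (hv : ∀ k ∈ Icc (-r) r, v (k + q) = v k) (hc : c ∈ Icc (-r) r)
    (hq : 2 * r < q) (h : EqOn u v (Ico c (c + q))) : EqOn u v (Icc (-r) (q + r)) := by
  obtain ⟨hc₁, hc₂⟩ := hc
  intro k ⟨hk₁, hk₂⟩
  rcases lt_or_ge k c with hkc | hkc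
  · calc u k = u (k + q) := (hu k).symm
      _ = v (k + q) := h ⟨by omega, by omega⟩
      _ = v k := hv k ⟨hk₁, by omega⟩
  rcases lt_or_ge k (c + q) with hkq | hkq
  · exact h ⟨hkc, hkq⟩
  · calc u k = u (k - q) := (hu.sub_eq k).symm
      _ = v (k - q) := h ⟨by omega, by omega⟩
      _ = v k := by simpa using (hv (k - q) ⟨by omega, by omega⟩).symm

section CellularAutomaton

variable {A : Type*} {F : Config A → Config A}

theorem shift_iterate_apply (x : Config A) (q : ℕ) (i : ℤ) : shift^[q] x i = x (i + q) := by
  induction q generalizing x with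
  | zero => simp
  | succ n ih =>
    rw [iterate_succ_apply, ih]
    simp only [shift, Nat.cast_succ, add_assoc]

theorem shift_iterate_eq_self_iff {u : Config A} {q : ℕ} : shift^[q] u = u ↔ Periodic u q := by
  simp only [funext_iff, shift_iterate_apply]
  rfl

theorem iterate_apply_shift_iterate (hc : F ∘ shift = shift ∘ F) (j q : ℕ) (y : Config A) :
    F^[j] (shift^[q] y) = shift^[q] (F^[j] y) :=
  (Commute.iterate_iterate (fun z => congrFun hc z) j q) y

theorem Function.Periodic.iterate_of_comp_shift (hc : F ∘ shift = shift ∘ F) {z : Config A}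
    {q : ℕ} (hz : Periodic z q) (j : ℕ) : Periodic (F^[j] z) q := by
  rw [← shift_iterate_eq_self_iff] at hz ⊢
  rw [← iterate_apply_shift_iterate hc, hz]

theorem HasRadius.eqOn_Icc {r : ℕ} (hrad : HasRadius F r) {x y : Config A} {a b : ℤ}
    (h : EqOn x y (Icc (a - r) (b + r))) : EqOn (F x) (F y) (Icc a b) :=
  fun i hi => hrad x y i fun _ hk₁ hk₂ => h ⟨by linarith [hi.1], by linarith [hi.2]⟩

theorem isClosed_Bset [TopologicalSpace A] [T2Space A] (hF : Continuous F) (i₁ i₂ : ℤ)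
    (x : Config A) : IsClosed (Bset F i₁ i₂ x) := by
  have hB : Bset F i₁ i₂ x = ⋂ j : ℕ, ⋂ k ∈ Icc i₁ i₂, {y | F^[j] y k = F^[j] x k} := by
    ext y
    simp only [Bset, mem_ofPred_eq, mem_iInter, mem_Icc, and_imp]
  rw [hB]
  exact isClosed_iInter fun j => isClosed_biInter fun k _ =>
    isClosed_eq ((continuous_apply k).comp (hF.iterate j)) continuous_const

variable {r : ℕ} {q : ℕ}

theorem eqOn_iterate_of_periodic (hc : F ∘ shift = shift ∘ F) (hrad : HasRadius F r)
    (hq : 2 * r < q) {y z : Config A} (hz : Periodic z q) (hzy : EqOn z y (Ico (-r) (-r + q)))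
    (hy : ∀ j, ∀ k ∈ Icc (-(r : ℤ)) r, F^[j] y (k + q) = F^[j] y k) (j : ℕ) :
    EqOn (F^[j] z) (F^[j] y) (Icc (-r) (q + r)) := by
  have hq' : 2 * (r : ℤ) < q := by exact_mod_cast hq
  induction j with
  | zero => exact hz.eqOn_Icc_of_eqOn_Ico (c := -r) (hy 0) ⟨le_rfl, by omega⟩ hq' hzy
  | succ j ih =>
    have hmid : EqOn (F^[j + 1] z) (F^[j + 1] y) (Icc 0 q) := by
      simp only [iterate_succ_apply']
      exact hrad.eqOn_Icc (by simpa using ih)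
    exact (hz.iterate_of_comp_shift hc (j + 1)).eqOn_Icc_of_eqOn_Ico (c := 0) (hy (j + 1))
      ⟨by omega, by omega⟩ hq' (by simpa using hmid.mono Ico_subset_Icc_self)

theorem exists_shift_periodic_mem_Bset (hc : F ∘ shift = shift ∘ F) (hrad : HasRadius F r)
    (hq : 2 * r < q) {x y : Config A} (hy : y ∈ Bset F (-r) r x)
    (hqy : shift^[q] y ∈ Bset F (-r) r x) : ∃ z ∈ Bset F (-r) r x, shift^[q] z = z := by
  have hq₀ : (0 : ℤ) < q := by omega
  have hz : Periodic (y ∘ toIcoMod hq₀ (-r)) q := (toIcoMod_periodic hq₀ _).comp y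
  have hzy : EqOn (y ∘ toIcoMod hq₀ (-r)) y (Ico (-r) (-r + q)) := fun k hk => by
    simp [(toIcoMod_eq_self hq₀).2 hk]
  have hwindow : ∀ j, ∀ k ∈ Icc (-(r : ℤ)) r, F^[j] y (k + q) = F^[j] y k := fun j k hk => by
    rw [← shift_iterate_apply (F^[j] y), ← iterate_apply_shift_iterate hc, hqy j k hk.1 hk.2,
      hy j k hk.1 hk.2]
  refine ⟨_, fun j k hk₁ hk₂ => ?_, shift_iterate_eq_self_iff.2 hz⟩
  rw [eqOn_iterate_of_periodic hc hrad hq hz hzy hwindow j ⟨hk₁, by omega⟩]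
  exact hy j k hk₁ hk₂

theorem exists_iterate_add_eq_of_shift_periodic_mem_Bset [Finite A]
    (hc : F ∘ shift = shift ∘ F) {i₁ i₂ : ℤ} {x z : Config A} (hz : z ∈ Bset F i₁ i₂ x)
    (hq : 0 < q) (hzq : shift^[q] z = z) :
    ∃ m p, 0 < p ∧ ∀ i, m ≤ i → ∀ k, i₁ ≤ k → k ≤ i₂ → F^[i + p] x k = F^[i] x k := by
  have hzper : Periodic z q := shift_iterate_eq_self_iff.1 hzq
  obtain ⟨m, p, hp, hmp⟩ := exists_iterate_add_eq_of_forall_mem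
    (finite_setOf_periodic (by omega : (0 : ℤ) < q)) (hzper.iterate_of_comp_shift hc)
  refine ⟨m, p, hp, fun i hi k hk₁ hk₂ => ?_⟩
  rw [← hz _ k hk₁ hk₂, hmp i hi, hz i k hk₁ hk₂]

end CellularAutomaton

theorem Bset_contains_spatially_periodic_and_words_eventually_periodic_general
    {A : Type} [Fintype A] [TopologicalSpace A] [DiscreteTopology A]
    [MeasurableSpace A] [BorelSpace A]
    (F : Config A → Config A) (hF : IsCA F) (r : ℕ)
    (hrad : HasRadius F r)
    (μ : Measure (Config A)) [IsProbabilityMeasure μ]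
    (herg : Ergodic shift μ)
    (x : Config A) (hpos : 0 < μ (Bset F (-(r : ℤ)) (r : ℤ) x)) :
    (∃ z ∈ Bset F (-(r : ℤ)) (r : ℤ) x, ∃ q : ℕ, 0 < q ∧ shift^[q] z = z) ∧
    (∃ (m p : ℕ), 0 < p ∧ ∀ i : ℕ, m ≤ i →
      ∀ k : ℤ, -(r : ℤ) ≤ k → k ≤ (r : ℤ) → F^[i + p] x k = F^[i] x k) := by
  have hB := (isClosed_Bset hF.1 (-(r : ℤ)) r x).measurableSet
  obtain ⟨q, hq, hreturn⟩ := herg.toMeasurePreserving.conservative.exists_gt_measure_inter_ne_zero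
    hB.nullMeasurableSet hpos.ne' (2 * r)
  obtain ⟨y, hy, hqy⟩ := nonempty_of_measure_ne_zero hreturn
  obtain ⟨z, hz, hzq⟩ := exists_shift_periodic_mem_Bset hF.2 hrad hq hy hqy
  exact ⟨⟨z, hz, q, by omega, hzq⟩,
    exists_iterate_add_eq_of_shift_periodic_mem_Bset hF.2 hz (by omega) hzq⟩

theorem Bset_contains_spatially_periodic_and_words_eventually_periodic
    {A : Type} [Fintype A] [Nonempty A] [TopologicalSpace A] [DiscreteTopology A]
    [MeasurableSpace A] [BorelSpace A]
    (F : Config A → Config A) (hF : IsCA F) (r : ℕ) (hr : 1 ≤ r)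
    (hrad : HasRadius F r)
    (μ : Measure (Config A)) [IsProbabilityMeasure μ]
    (herg : Ergodic shift μ)
    (x : Config A) (hpos : 0 < μ (Bset F (-(r : ℤ)) (r : ℤ) x)) :
    (∃ z ∈ Bset F (-(r : ℤ)) (r : ℤ) x, ∃ q : ℕ, 0 < q ∧ shift^[q] z = z) ∧
    (∃ (m p : ℕ), 0 < p ∧ ∀ i : ℕ, m ≤ i →
      ∀ k : ℤ, -(r : ℤ) ≤ k → k ≤ (r : ℤ) → F^[i + p] x k = F^[i] x k) :=
  Bset_contains_spatially_periodic_and_words_eventually_periodic_general F hF r hrad μ herg x hpos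
end

section
/- Let F be a surjective cellular automaton that has at least one equicontinuity point but is not equicontinuous. Then the set of integers p > 0 for which there exist a nonempty subset W ⊆ A^ℤ with F(W) ⊆ W and a continuous surjection π : W → ℤ/pℤ satisfying π(F(x)) = π(x) + 1 for all x ∈ W is infinite. -/
open Function Set

/-- `p` is a period of a periodic factor of (a subsystem of) `F`: there is a nonempty
`F`-invariant set `W` and a continuous surjection `π : W → ℤ/pℤ` conjugating `F` with
the rotation `x ↦ x + 1`. -/
def IsPeriodicFactorPeriod {A : Type*} [TopologicalSpace A]
    (F : Config A → Config A) (p : ℕ) : Prop :=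
  0 < p ∧ ∃ (W : Set (Config A)), W.Nonempty ∧
    ∃ (hFW : MapsTo F W W) (π : W → ZMod p), Surjective π ∧ Continuous π ∧
      ∀ (x : Config A) (hxW : x ∈ W), π ⟨F x, hFW hxW⟩ = π ⟨x, hxW⟩ + 1

namespace CAaux
set_option linter.unusedSectionVars false
set_option linter.unusedVariables false
set_option maxHeartbeats 1600000

/-- translate by `c`: `tr c x i = x (i - c)`. -/
def tr {A : Type*} (c : ℤ) (x : Config A) : Config A := fun i => x (i - c)

theorem tr_tr {A : Type*} (c d : ℤ) (x : Config A) : tr c (tr d x) = tr (c + d) x := by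
  funext i; simp [tr, sub_sub]

theorem tr_zero {A : Type*} (x : Config A) : tr 0 x = x := by funext i; simp [tr]

variable {A : Type*} [TopologicalSpace A] {F : Config A → Config A}

theorem tr_comm (hF : IsCA F) (c : ℤ) (x : Config A) : F (tr c x) = tr c (F x) := by
  have hs : ∀ y : Config A, F (shift y) = shift (F y) := fun y => congrFun hF.2 y
  -- first: negative translations are shift iterates : tr (-(m:ℤ)) x = shift^[m] x
  have hiter : ∀ (m : ℕ) (y : Config A), F (tr (-(m:ℤ)) y) = tr (-(m:ℤ)) (F y) := by
    intro m
    induction m with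
    | zero => intro y; simp [tr_zero]
    | succ m ih =>
      intro y
      have h1 : tr (-(↑(m+1):ℤ)) y = tr (-(m:ℤ)) (shift y) := by
        funext i; simp [tr, shift]; ring_nf
      have h2 : tr (-(↑(m+1):ℤ)) (F y) = tr (-(m:ℤ)) (shift (F y)) := by
        funext i; simp [tr, shift]; ring_nf
      rw [h1, h2, ih (shift y), hs y]
  rcases le_or_gt 0 c with hc | hc
  · -- c ≥ 0 : use inverse trick
    obtain ⟨m, rfl⟩ := Int.eq_ofNat_of_zero_le hc
    have key := hiter m (tr (m:ℤ) x)
    rw [tr_tr, neg_add_cancel, tr_zero] at key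
    rw [key, tr_tr, add_neg_cancel, tr_zero]
  · obtain ⟨m, rfl⟩ : ∃ m : ℕ, c = -(m:ℤ) := ⟨c.natAbs, by omega⟩
    exact hiter m x

theorem tr_iter_comm (hF : IsCA F) (c : ℤ) (t : ℕ) (x : Config A) :
    F^[t] (tr c x) = tr c (F^[t] x) := by
  induction t with
  | zero => simp
  | succ t ih =>
    rw [Function.iterate_succ_apply', Function.iterate_succ_apply', ih, tr_comm hF]


variable {A : Type} [Fintype A] [Nonempty A] [TopologicalSpace A] [DiscreteTopology A]
variable {F : Config A → Config A}

/-- radius property -/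
def HasRadius {A : Type*} (F : Config A → Config A) (r : ℕ) : Prop :=
  ∀ x y : Config A, ∀ i : ℤ, (∀ j : ℤ, i - r ≤ j → j ≤ i + r → x j = y j) → F x i = F y i

variable {A : Type} [Fintype A] [Nonempty A] [TopologicalSpace A] [DiscreteTopology A]
variable {F : Config A → Config A}

theorem exists_radius (hF : IsCA F) : ∃ r : ℕ, HasRadius F r := by
  classical
  have hg : Continuous (fun x : Config A => F x 0) := (continuous_apply (0:ℤ)).comp hF.1
  -- for each x, find a finite set I of coordinates controlling the value near x
  have hloc : ∀ x : Config A, ∃ I : Finset ℤ,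
      ∀ y : Config A, (∀ i ∈ I, y i = x i) → F y 0 = F x 0 := by
    intro x
    have hU : {y : Config A | F y 0 = F x 0} ∈ nhds x := by
      have : IsOpen {y : Config A | F y 0 = F x 0} := by
        have := hg.isOpen_preimage {F x 0} (isOpen_discrete _)
        exact this
      exact this.mem_nhds rfl
    rw [nhds_pi, Filter.mem_pi] at hU
    obtain ⟨I, hIfin, t, ht, hsub⟩ := hU
    refine ⟨hIfin.toFinset, fun y hy => ?_⟩
    apply hsub
    intro i hi
    have : y i = x i := hy i (hIfin.mem_toFinset.mpr hi)
    rw [this]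
    exact mem_of_mem_nhds (ht i)
  choose I hI using hloc
  -- cylinders are open
  have hcylopen : ∀ x : Config A, IsOpen {y : Config A | ∀ i ∈ I x, y i = x i} := by
    intro x
    have : {y : Config A | ∀ i ∈ I x, y i = x i} = ⋂ i ∈ I x, (fun y : Config A => y i) ⁻¹' {x i} := by
      ext y; simp
    rw [this]
    exact isOpen_biInter_finset fun i _ => (continuous_apply i).isOpen_preimage _ (isOpen_discrete _)
  obtain ⟨s, hs⟩ := IsCompact.elim_finite_subcover (isCompact_univ (X := Config A))
    (fun x : Config A => {y : Config A | ∀ i ∈ I x, y i = x i}) (fun x => hcylopen x)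
    (by intro x _; exact mem_iUnion.mpr ⟨x, fun i _ => rfl⟩)
  -- r := max over s of coordinates
  set r : ℕ := (s.sup (fun x => (I x).sup (fun i => i.natAbs))) with hr
  have hIr : ∀ x ∈ s, ∀ i ∈ I x, i.natAbs ≤ r := by
    intro x hx i hi
    exact le_trans (Finset.le_sup hi) (Finset.le_sup (f := fun x => (I x).sup (fun i => i.natAbs)) hx)
  have key : ∀ x y : Config A, (∀ j : ℤ, -(r:ℤ) ≤ j → j ≤ r → x j = y j) → F x 0 = F y 0 := by
    intro x y hxy
    obtain ⟨z, hz1, hz2⟩ := mem_iUnion₂.mp (hs (mem_univ x))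
    have hyz : ∀ i ∈ I z, y i = z i := by
      intro i hi
      have hina : i.natAbs ≤ r := hIr z hz1 i hi
      have : x i = y i := hxy i (by omega) (by omega)
      rw [← this]; exact hz2 i hi
    rw [hI z x hz2, hI z y hyz]
  refine ⟨r, fun x y i hxy => ?_⟩
  -- translate to 0
  have h0 : F (tr (-i) x) 0 = F (tr (-i) y) 0 := by
    apply key
    intro j hj1 hj2
    show x (j - -i) = y (j - -i)
    apply hxy <;> omega
  have hx := tr_comm hF (-i) x
  have hy := tr_comm hF (-i) y
  have : tr (-i) (F x) 0 = tr (-i) (F y) 0 := by rw [← hx, ← hy]; exact h0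
  simpa [tr] using this


/-- spatial periodicity with period `P` -/
def PerC {A : Type*} (P : ℕ) (z : Config A) : Prop := ∀ i : ℤ, z (i + P) = z i

theorem perC_mul_nat {P : ℕ} {z : Config A} (hz : PerC P z) (k : ℕ) (i : ℤ) :
    z (i + k * P) = z i := by
  induction k with
  | zero => simp
  | succ k ih =>
    have e : i + ((k:ℤ)+1) * P = (i + k * P) + P := by ring
    push_cast
    rw [e, hz, ih]

theorem perC_mul {P : ℕ} {z : Config A} (hz : PerC P z) (k : ℤ) (i : ℤ) :
    z (i + k * P) = z i := by
  rcases le_or_gt 0 k with hk | hk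
  · obtain ⟨m, rfl⟩ := Int.eq_ofNat_of_zero_le hk
    exact_mod_cast perC_mul_nat hz m i
  · obtain ⟨m, rfl⟩ : ∃ m : ℕ, k = -(m:ℤ) := ⟨k.natAbs, by omega⟩
    have := perC_mul_nat hz m (i + (-(m:ℤ)) * P)
    have e : i + -(m:ℤ) * P + m * P = i := by ring
    rw [e] at this
    exact this.symm

theorem perC_F (hF : IsCA F) {P : ℕ} {z : Config A} (hz : PerC P z) : PerC P (F z) := by
  intro i
  have h : tr (-(P:ℤ)) z = z := funext fun j => by
    show z (j - -(P:ℤ)) = z j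
    rw [sub_neg_eq_add]; exact hz j
  have key := congrFun (tr_comm hF (-(P:ℤ)) z) i
  rw [h] at key
  have key2 : F z i = F z (i + P) := by
    rw [key]; show F z (i - -(P:ℤ)) = F z (i + P); rw [sub_neg_eq_add]
  exact key2.symm

theorem perC_iter (hF : IsCA F) {P : ℕ} {z : Config A} (hz : PerC P z) (t : ℕ) :
    PerC P (F^[t] z) := by
  induction t with
  | zero => simpa
  | succ t ih => rw [Function.iterate_succ_apply']; exact perC_F hF ih

theorem perC_ext {P : ℕ} (hP : 0 < P) {z w : Config A} (hz : PerC P z) (hw : PerC P w)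
    (h : ∀ i : ℤ, 0 ≤ i → i < P → z i = w i) : z = w := by
  funext i
  have hPz : (0:ℤ) < P := by exact_mod_cast hP
  have h1 : z i = z (i % P) := by
    conv_lhs => rw [← Int.emod_add_mul_ediv i P]
    rw [mul_comm]
    exact perC_mul hz (i / P) (i % P)
  have h2 : w i = w (i % P) := by
    conv_lhs => rw [← Int.emod_add_mul_ediv i P]
    rw [mul_comm]
    exact perC_mul hw (i / P) (i % P)
  rw [h1, h2]
  exact h _ (Int.emod_nonneg i hPz.ne') (Int.emod_lt_of_pos i hPz)

/-- pigeonhole: orbits of spatially periodic points are eventually (temporally) periodic -/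
theorem eventually_periodic (hF : IsCA F) {P : ℕ} (hP : 0 < P) {z : Config A} (hz : PerC P z) :
    ∃ a d : ℕ, 1 ≤ d ∧ F^[a + d] z = F^[a] z := by
  classical
  set Θ : ℕ → (Fin P → A) := fun t => fun j => F^[t] z (j : ℤ) with hΘ
  have : ¬ Function.Injective Θ := by
    intro hinj
    exact (Finite.of_injective Θ hinj).false
  rw [Function.not_injective_iff] at this
  obtain ⟨t₁, t₂, heq, hne⟩ := this
  rcases Nat.lt_or_ge t₁ t₂ with h | h
  · refine ⟨t₁, t₂ - t₁, by omega, ?_⟩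
    have e : t₁ + (t₂ - t₁) = t₂ := by omega
    rw [e]
    apply perC_ext hP (perC_iter hF hz t₂) (perC_iter hF hz t₁)
    intro i hi1 hi2
    lift i to ℕ using hi1 with iN
    have hlt : iN < P := by exact_mod_cast hi2
    calc F^[t₂] z iN = Θ t₂ ⟨iN, hlt⟩ := rfl
      _ = Θ t₁ ⟨iN, hlt⟩ := by rw [heq]
      _ = F^[t₁] z iN := rfl
  · refine ⟨t₂, t₁ - t₂, by omega, ?_⟩
    have e : t₂ + (t₁ - t₂) = t₁ := by omega
    rw [e]
    apply perC_ext hP (perC_iter hF hz t₁) (perC_iter hF hz t₂)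
    intro i hi1 hi2
    lift i to ℕ using hi1 with iN
    have hlt : iN < P := by exact_mod_cast hi2
    calc F^[t₁] z iN = Θ t₁ ⟨iN, hlt⟩ := rfl
      _ = Θ t₂ ⟨iN, hlt⟩ := by rw [heq]
      _ = F^[t₂] z iN := rfl


/-- a periodic point with least period `d` yields a periodic factor of period `d` -/
theorem stepA {x : Config A} {d : ℕ} (hd : 0 < d) (hfix : F^[d] x = x)
    (hmin : ∀ e : ℕ, 0 < e → F^[e] x = x → d ≤ e) : IsPeriodicFactorPeriod F d := by
  classical
  haveI : NeZero d := ⟨hd.ne'⟩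
  -- injectivity of k ↦ F^[k] x for k < d
  have hinj : ∀ k k' : ℕ, k < d → k' < d → F^[k] x = F^[k'] x → k = k' := by
    have key : ∀ k k' : ℕ, k ≤ k' → k < d → k' < d → F^[k] x = F^[k'] x → k = k' := by
      intro k k' hle hk hk' heq
      by_contra hne
      have hlt : k < k' := lt_of_le_of_ne hle hne
      have h1 : F^[d - k' + k'] x = x := by rw [Nat.sub_add_cancel hk'.le]; exact hfix
      have h2 : F^[d - k'] (F^[k'] x) = x := by rw [← Function.iterate_add_apply]; exact h1
      have h3 : F^[d - k' + k] x = x := by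
        rw [Function.iterate_add_apply, heq]
        exact h2
      have := hmin (d - k' + k) (by omega) h3
      omega
    intro k k' hk hk' heq
    rcases le_or_gt k k' with h | h
    · exact key k k' h hk hk' heq
    · exact (key k' k h.le hk' hk heq.symm).symm
  set W : Set (Config A) := Set.range (fun k : Fin d => F^[(k:ℕ)] x) with hW
  have hxW : x ∈ W := ⟨⟨0, hd⟩, rfl⟩
  have hFW : MapsTo F W W := by
    rintro _ ⟨k, rfl⟩
    rcases Nat.lt_or_ge ((k:ℕ)+1) d with h | h
    · exact ⟨⟨(k:ℕ)+1, h⟩, by simp [Function.iterate_succ_apply']⟩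
    · have hkd : (k:ℕ)+1 = d := by have := k.isLt; omega
      refine ⟨⟨0, hd⟩, ?_⟩
      show F^[0] x = F (F^[(k:ℕ)] x)
      have hstep : F (F^[(k:ℕ)] x) = F^[(k:ℕ)+1] x := (Function.iterate_succ_apply' F _ x).symm
      rw [hstep, hkd, hfix]
      rfl
  -- existence of representation
  have hrep : ∀ w : W, ∃ k : ℕ, k < d ∧ F^[k] x = (w : Config A) := by
    rintro ⟨_, ⟨k, rfl⟩⟩
    exact ⟨(k:ℕ), k.isLt, rfl⟩
  choose rep hreplt hrepeq using hrep
  have hrep_unique : ∀ (w : W) (k : ℕ), k < d → F^[k] x = (w : Config A) → rep w = k := by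
    intro w k hk hkeq
    exact hinj _ _ (hreplt w) hk (by rw [hrepeq w, ← hkeq])
  set π : W → ZMod d := fun w => ((rep w : ℕ) : ZMod d) with hπ
  have hπval : ∀ (k : ℕ) (hk : k < d) (hmem : F^[k] x ∈ W), π ⟨F^[k] x, hmem⟩ = (k : ZMod d) := by
    intro k hk hmem
    simp only [hπ]
    rw [hrep_unique ⟨F^[k] x, hmem⟩ k hk rfl]
  -- finiteness and discreteness of W
  have hWfin : W.Finite := Set.finite_range _
  haveI : Finite W := hWfin.to_subtype
  haveI : DiscreteTopology W := by
    haveI : T1Space (Config A) := inferInstance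
    exact @Finite.instDiscreteTopology _ _ _ _
  refine ⟨hd, W, ⟨x, hxW⟩, hFW, π, ?_, ?_, ?_⟩
  · -- surjective
    intro c
    have hcv : (c.val : ℕ) < d := ZMod.val_lt c
    have hmem : F^[c.val] x ∈ W := ⟨⟨c.val, hcv⟩, rfl⟩
    refine ⟨⟨F^[c.val] x, hmem⟩, ?_⟩
    rw [hπval c.val hcv hmem]
    exact ZMod.natCast_rightInverse c
  · exact continuous_of_discreteTopology
  · intro w hw
    obtain ⟨k, hkd, hkeq⟩ : ∃ k : ℕ, k < d ∧ F^[k] x = w := by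
      obtain ⟨kk, hh⟩ := (⟨w, hw⟩ : W).2
      exact ⟨kk, kk.isLt, hh⟩
    subst hkeq
    have h1 : π ⟨F^[k] x, hw⟩ = (k : ZMod d) := hπval k hkd hw
    rcases Nat.lt_or_ge (k+1) d with h | h
    · have h2 : F (F^[k] x) = F^[k+1] x := (Function.iterate_succ_apply' F k x).symm
      have hmem2 : F (F^[k] x) ∈ W := hFW hw
      have hmem3 : F^[k+1] x ∈ W := h2 ▸ hmem2
      have : π ⟨F (F^[k] x), hmem2⟩ = ((k+1 : ℕ) : ZMod d) := by
        have heqsub : (⟨F (F^[k] x), hmem2⟩ : W) = ⟨F^[k+1] x, hmem3⟩ := Subtype.ext h2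
        rw [heqsub]; exact hπval (k+1) h hmem3
      rw [this, h1]
      push_cast; ring
    · have hkd1 : k + 1 = d := by omega
      have h2 : F (F^[k] x) = x := by
        have hstep : F (F^[k] x) = F^[k+1] x := (Function.iterate_succ_apply' F _ x).symm
        rw [hstep, hkd1, hfix]
      have hmem2 : F (F^[k] x) ∈ W := hFW hw
      have : π ⟨F (F^[k] x), hmem2⟩ = ((0 : ℕ) : ZMod d) := by
        have heqsub : (⟨F (F^[k] x), hmem2⟩ : W) = ⟨F^[0] x, hxW⟩ := Subtype.ext h2
        rw [heqsub]; exact hπval 0 hd hxW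
      rw [this, h1]
      have : ((d : ℕ) : ZMod d) = 0 := ZMod.natCast_self d
      push_cast
      rw [show ((k:ZMod d) + 1) = ((d:ℕ) : ZMod d) by push_cast [← hkd1]; ring, this]


/-- embedding of a word into a configuration, at offset `o`, default `a₀` -/
def eW (a₀ : A) (o : ℤ) {ℓ : ℕ} (w : Fin ℓ → A) : Config A := fun i =>
  if h : 0 ≤ i - o ∧ i - o < (ℓ:ℤ) then w ⟨(i - o).toNat, by omega⟩ else a₀

theorem eW_spec (a₀ : A) (o : ℤ) {ℓ : ℕ} (w : Fin ℓ → A) (i : ℤ) (h1 : 0 ≤ i - o)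
    (h2 : i - o < (ℓ:ℤ)) : eW a₀ o w i = w ⟨(i - o).toNat, by omega⟩ := by
  unfold eW; rw [dif_pos ⟨h1, h2⟩]

theorem eW_spec' (a₀ : A) {ℓ : ℕ} (w : Fin ℓ → A) (t : Fin ℓ) : eW a₀ 0 w ((t:ℕ):ℤ) = w t := by
  have hb := t.isLt
  rw [eW_spec a₀ 0 w _ (by omega) (by omega)]
  exact congrArg w (Fin.ext (by simp))

theorem eW_out (a₀ : A) (o : ℤ) {ℓ : ℕ} (w : Fin ℓ → A) (i : ℤ)
    (h : i - o < 0 ∨ (ℓ:ℤ) ≤ i - o) : eW a₀ o w i = a₀ := by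
  unfold eW; rw [dif_neg (by omega)]

section Moore

variable (a₀ : A) (r K n : ℕ) (p₁ p₂ : Fin K → A)

open Classical in
/-- normalization at configuration level: replace each `p₂`-block by `p₁` -/
noncomputable def NC (hK : 0 < K) (ξ : Config A) : Config A := fun i =>
  if h : (r:ℤ) ≤ i ∧ i < (r:ℤ) + (K:ℤ)*(n:ℤ) ∧
      (∀ t : Fin K, ξ ((r:ℤ) + (K:ℤ)*(((i - r).toNat / K : ℕ):ℤ) + ((t:ℕ):ℤ)) = p₂ t)
  then p₁ ⟨(i - r).toNat % K, Nat.mod_lt _ hK⟩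
  else ξ i

/-- the condition that block `j` of `ξ` reads `p₂` -/
def blockCond (j : ℕ) (ξ : Config A) : Prop :=
  ∀ t : Fin K, ξ ((r:ℤ) + (K:ℤ)*(j:ℤ) + ((t:ℕ):ℤ)) = p₂ t

theorem pos_decomp (hK : 0 < K) (j t : ℕ) (hj : j < n) (ht : t < K) :
    ((((r:ℤ) + (K:ℤ)*(j:ℤ) + ((t:ℕ):ℤ)) - r).toNat / K = j) ∧
    ((((r:ℤ) + (K:ℤ)*(j:ℤ) + ((t:ℕ):ℤ)) - r).toNat % K = t) ∧
    ((r:ℤ) ≤ (r:ℤ) + (K:ℤ)*(j:ℤ) + ((t:ℕ):ℤ)) ∧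
    ((r:ℤ) + (K:ℤ)*(j:ℤ) + ((t:ℕ):ℤ) < (r:ℤ) + (K:ℤ)*(n:ℤ)) := by
  have h1 : ((r:ℤ) + (K:ℤ)*(j:ℤ) + ((t:ℕ):ℤ)) - r = ((K*j + t : ℕ) : ℤ) := by push_cast; ring
  have h2 : (((K*j + t : ℕ) : ℤ)).toNat = K*j + t := Int.toNat_natCast _
  have hdiv : (K*j + t) / K = j := by
    rw [Nat.mul_add_div hK, Nat.div_eq_of_lt ht, Nat.add_zero]
  have hmod : (K*j + t) % K = t := by
    rw [Nat.mul_add_mod, Nat.mod_eq_of_lt ht]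
  have hlt : K*j + t < K*n := by
    calc K*j + t < K*j + K := by omega
    _ = K*(j+1) := by ring
    _ ≤ K*n := Nat.mul_le_mul_left K (by omega)
  refine ⟨by rw [h1, h2, hdiv], by rw [h1, h2, hmod], by
    have h6 : (0:ℤ) ≤ (K:ℤ)*(j:ℤ) := by positivity
    omega, ?_⟩
  have : ((K*j + t : ℕ) : ℤ) < (K:ℤ)*(n:ℤ) := by exact_mod_cast hlt
  omega

theorem NC_out (hK : 0 < K) (ξ : Config A) (i : ℤ) (h : i < (r:ℤ) ∨ (r:ℤ) + (K:ℤ)*(n:ℤ) ≤ i) :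
    NC r K n p₁ p₂ hK ξ i = ξ i := by
  unfold NC; rw [dif_neg (by push_neg; intro h1 h2; omega)]

theorem NC_block_pos (hK : 0 < K) (ξ : Config A) (j t : ℕ) (hj : j < n) (ht : t < K)
    (hbc : blockCond r K p₂ j ξ) :
    NC r K n p₁ p₂ hK ξ ((r:ℤ) + (K:ℤ)*(j:ℤ) + ((t:ℕ):ℤ)) = p₁ ⟨t, ht⟩ := by
  obtain ⟨hd, hm, hge, hlt⟩ := pos_decomp (K := K) (r := r) (n := n) hK j t hj ht
  unfold NC
  rw [dif_pos ⟨hge, hlt, by rw [hd]; exact hbc⟩]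
  exact congrArg p₁ (Fin.ext (by simpa using hm))

theorem NC_block_neg (hK : 0 < K) (ξ : Config A) (j t : ℕ) (hj : j < n) (ht : t < K)
    (hbc : ¬ blockCond r K p₂ j ξ) :
    NC r K n p₁ p₂ hK ξ ((r:ℤ) + (K:ℤ)*(j:ℤ) + ((t:ℕ):ℤ)) = ξ ((r:ℤ) + (K:ℤ)*(j:ℤ) + ((t:ℕ):ℤ)) := by
  obtain ⟨hd, hm, hge, hlt⟩ := pos_decomp (K := K) (r := r) (n := n) hK j t hj ht
  unfold NC
  rw [dif_neg]
  rintro ⟨h1, h2, hc⟩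
  rw [hd] at hc
  exact hbc hc

theorem NC_diff (hK : 0 < K) (ξ : Config A) (i : ℤ) (h : NC r K n p₁ p₂ hK ξ i ≠ ξ i) :
    ∃ (j t : ℕ) (hj : j < n) (ht : t < K), i = (r:ℤ) + (K:ℤ)*(j:ℤ) + ((t:ℕ):ℤ) ∧
      blockCond r K p₂ j ξ ∧ p₁ ⟨t, ht⟩ ≠ p₂ ⟨t, ht⟩ := by
  unfold NC at h
  by_cases hcond : (r:ℤ) ≤ i ∧ i < (r:ℤ) + (K:ℤ)*(n:ℤ) ∧
      (∀ t : Fin K, ξ ((r:ℤ) + (K:ℤ)*(((i - r).toNat / K : ℕ):ℤ) + ((t:ℕ):ℤ)) = p₂ t)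
  · obtain ⟨h1, h2, h3⟩ := hcond
    rw [dif_pos ⟨h1, h2, h3⟩] at h
    set s : ℕ := (i - r).toNat with hs
    have hsval : (s:ℤ) = i - r := Int.toNat_of_nonneg (by omega)
    have hsK : s < K*n := by
      have h4 : (s:ℤ) < (K:ℤ)*(n:ℤ) := by omega
      exact_mod_cast h4
    set j : ℕ := s / K with hj
    set t : ℕ := s % K with ht
    have hjn : j < n := by
      rw [hj, Nat.div_lt_iff_lt_mul hK, Nat.mul_comm]
      exact hsK
    have htK : t < K := Nat.mod_lt _ hK
    have hst : K*j + t = s := by rw [hj, ht]; exact Nat.div_add_mod s K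
    have hi : i = (r:ℤ) + (K:ℤ)*(j:ℤ) + ((t:ℕ):ℤ) := by
      have h5 : ((K*j + t : ℕ):ℤ) = (s:ℤ) := by exact_mod_cast hst
      push_cast at h5
      omega
    have hxi : ξ i = p₂ ⟨t, htK⟩ := by
      rw [hi]; exact h3 ⟨t, htK⟩
    refine ⟨j, t, hjn, htK, hi, h3, ?_⟩
    intro hcon
    apply h
    show p₁ ⟨t, htK⟩ = ξ i
    rw [hcon, hxi]
  · rw [dif_neg hcond] at h
    exact absurd rfl h

end Moore

theorem preinj {r : ℕ} (hF : IsCA F) (hr : HasRadius F r) (hsurj : Surjective F)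
    {u v : Config A} (huv : F u = F v) {a b : ℤ}
    (hbd : ∀ i : ℤ, i < a ∨ b < i → u i = v i) : u = v := by
  classical
  by_contra hneq
  obtain ⟨j₀, hj₀⟩ : ∃ j₀ : ℤ, u j₀ ≠ v j₀ := by
    by_contra h; push_neg at h; exact hneq (funext h)
  rcases subsingleton_or_nontrivial A with hss | hnt
  · exact hj₀ (Subsingleton.elim _ _)
  set a₀ : A := Classical.arbitrary A
  set k : ℕ := a.natAbs + b.natAbs with hk
  have hdiff : ∀ i : ℤ, u i ≠ v i → -(k:ℤ) ≤ i ∧ i ≤ (k:ℤ) := by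
    intro i hi
    have h1 : ¬ (i < a ∨ b < i) := fun h => hi (hbd i h)
    push_neg at h1
    omega
  set K : ℕ := 2*k + 1 + 4*r with hKdef
  have hK : 0 < K := by omega
  set p₁ : Fin K → A := fun t => u (((t:ℕ):ℤ) - ((k:ℤ) + 2*(r:ℤ))) with hp₁
  set p₂ : Fin K → A := fun t => v (((t:ℕ):ℤ) - ((k:ℤ) + 2*(r:ℤ))) with hp₂
  have hcore : ∀ tt : Fin K, p₁ tt ≠ p₂ tt → 2*(r:ℤ) ≤ ((tt:ℕ):ℤ) ∧ ((tt:ℕ):ℤ) + 2*(r:ℤ) < (K:ℤ) := by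
    intro tt h
    have := hdiff _ h
    have hlt := tt.isLt
    omega
  have hp_ne : p₁ ≠ p₂ := by
    have hj₀b := hdiff j₀ hj₀
    have ht₀ : (j₀ + k + 2*r).toNat < K := by omega
    intro heq
    have h := congrFun heq ⟨(j₀ + k + 2*r).toNat, ht₀⟩
    simp only [hp₁, hp₂] at h
    have harg : (((j₀ + k + 2*r).toNat : ℕ):ℤ) - ((k:ℤ) + 2*(r:ℤ)) = j₀ := by omega
    rw [harg] at h
    exact hj₀ h
  -- the counting estimate
  have key : ∀ n : ℕ, Fintype.card (Fin (K*n) → A) ≤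
      Fintype.card ((Fin r → A) × (Fin r → A) × (Fin n → {g : Fin K → A // g ≠ p₂})) := by
    intro n
    set ℓ : ℕ := K*n + 2*r with hℓ
    set e : (Fin ℓ → A) → Config A := fun w => eW a₀ 0 w with he
    set Φ : (Fin ℓ → A) → (Fin (K*n) → A) := fun w i => F (e w) (((i:ℕ):ℤ) + r) with hΦ
    have hΦsurj : Surjective Φ := by
      intro ω
      obtain ⟨x, hx⟩ := hsurj (eW a₀ r ω)
      refine ⟨fun t => x ((t:ℕ):ℤ), ?_⟩
      funext i
      show F (e fun t => x ((t:ℕ):ℤ)) (((i:ℕ):ℤ) + r) = ω i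
      have hwin : F (e fun t => x ((t:ℕ):ℤ)) (((i:ℕ):ℤ) + r) = F x (((i:ℕ):ℤ) + r) := by
        apply hr
        intro z hz1 hz2
        have hib := i.isLt
        have hzb : 0 ≤ z ∧ z < (ℓ:ℤ) := by
          constructor
          · omega
          · push_cast [hℓ]; omega
        show eW a₀ 0 (fun t => x ((t:ℕ):ℤ)) z = x z
        rw [eW_spec a₀ 0 _ z (by omega) (by omega)]
        show x (((((z - 0).toNat):ℕ):ℤ)) = x z
        congr 1
        omega
      rw [hwin, hx]
      rw [eW_spec a₀ r ω (((i:ℕ):ℤ) + r) (by omega) (by have := i.isLt; push_cast; omega)]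
      congr 1
      have : ((i:ℕ):ℤ) + r - r = ((i:ℕ):ℤ) := by ring
      exact Fin.ext (by simp [this])
    set Nw : (Fin ℓ → A) → (Fin ℓ → A) := fun w t => NC r K n p₁ p₂ hK (e w) ((t:ℕ):ℤ) with hNw
    have heN : ∀ w, e (Nw w) = NC r K n p₁ p₂ hK (e w) := by
      intro w
      funext i
      by_cases h : 0 ≤ i ∧ i < (ℓ:ℤ)
      · show eW a₀ 0 (Nw w) i = _
        rw [eW_spec a₀ 0 _ i (by omega) (by omega)]
        show NC r K n p₁ p₂ hK (e w) ((((i - 0).toNat : ℕ)):ℤ) = _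
        congr 1
        omega
      · push_neg at h
        have h1 : eW a₀ 0 (Nw w) i = a₀ := eW_out a₀ 0 _ i (by omega)
        have h2 : NC r K n p₁ p₂ hK (e w) i = e w i := by
          apply NC_out
          push_cast [hℓ] at h ⊢
          omega
        have h3 : e w i = a₀ := eW_out a₀ 0 _ i (by omega)
        calc e (Nw w) i = a₀ := eW_out a₀ 0 _ i (by omega)
        _ = e w i := h3.symm
        _ = NC r K n p₁ p₂ hK (e w) i := h2.symm
    have hΦN : ∀ w, Φ (Nw w) = Φ w := by
      intro w
      funext i
      show F (e (Nw w)) (((i:ℕ):ℤ) + r) = F (e w) (((i:ℕ):ℤ) + r)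
      rw [heN w]
      set ξ := e w with hξ
      set s : ℤ := ((i:ℕ):ℤ) + r with hs
      by_cases hA : ∀ z : ℤ, s - r ≤ z → z ≤ s + r → NC r K n p₁ p₂ hK ξ z = ξ z
      · exact hr _ _ _ hA
      · push_neg at hA
        obtain ⟨pos, hz1, hz2, hzne⟩ := hA
        obtain ⟨j, t, hj, ht, hposdef, hbc, hp12⟩ := NC_diff r K n p₁ p₂ hK ξ pos hzne
        have hcoret := hcore ⟨t, ht⟩ hp12
        simp only at hcoret
        set c : ℤ := (r:ℤ) + (K:ℤ)*(j:ℤ) + (k:ℤ) + 2*(r:ℤ) with hc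
        have hwin : ∀ z : ℤ, s - r ≤ z → z ≤ s + r →
            ∃ tz : ℕ, tz < K ∧ z = (r:ℤ) + (K:ℤ)*(j:ℤ) + ((tz:ℕ):ℤ) := by
          intro z hza hzb
          refine ⟨(z - ((r:ℤ) + (K:ℤ)*(j:ℤ))).toNat, by omega, by omega⟩
        have h1 : F (NC r K n p₁ p₂ hK ξ) s = F (tr c u) s := by
          apply hr
          intro z hza hzb
          obtain ⟨tz, htz, hzdef⟩ := hwin z hza hzb
          rw [hzdef, NC_block_pos r K n p₁ p₂ hK ξ j tz hj htz hbc]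
          show u (((tz:ℕ):ℤ) - ((k:ℤ) + 2*(r:ℤ))) = u ((r:ℤ) + (K:ℤ)*(j:ℤ) + ((tz:ℕ):ℤ) - c)
          congr 1
          rw [hc]; ring
        have h2 : F ξ s = F (tr c v) s := by
          apply hr
          intro z hza hzb
          obtain ⟨tz, htz, hzdef⟩ := hwin z hza hzb
          rw [hzdef]
          have := hbc ⟨tz, htz⟩
          rw [this]
          show v (((tz:ℕ):ℤ) - ((k:ℤ) + 2*(r:ℤ))) = v ((r:ℤ) + (K:ℤ)*(j:ℤ) + ((tz:ℕ):ℤ) - c)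
          congr 1
          rw [hc]; ring
        rw [h1, h2, tr_comm hF, tr_comm hF]
        show F u (s - c) = F v (s - c)
        rw [huv]
    -- margins and blocks
    set m1 : (Fin ℓ → A) → (Fin r → A) := fun w t => e w ((t:ℕ):ℤ) with hm1def
    set m2 : (Fin ℓ → A) → (Fin r → A) := fun w t => e w ((r:ℤ) + (K:ℤ)*(n:ℤ) + ((t:ℕ):ℤ)) with hm2def
    set bw : Fin n → (Fin ℓ → A) → (Fin K → A) :=
      fun j w t => e w ((r:ℤ) + (K:ℤ)*((j:ℕ):ℤ) + ((t:ℕ):ℤ)) with hbwdef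
    have hrecon : ∀ w w' : Fin ℓ → A, m1 w = m1 w' → m2 w = m2 w' →
        (∀ j : Fin n, bw j w = bw j w') → w = w' := by
      intro w w' h1 h2 h3
      funext tt
      have htt := tt.isLt
      rw [← eW_spec' a₀ w tt, ← eW_spec' a₀ w' tt]
      show e w ((tt:ℕ):ℤ) = e w' ((tt:ℕ):ℤ)
      rcases Nat.lt_or_ge (tt:ℕ) r with hcase | hcase
      · have := congrFun h1 ⟨(tt:ℕ), hcase⟩
        exact this
      · rcases Nat.lt_or_ge (tt:ℕ) (r + K*n) with hcase2 | hcase2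
        · set si : ℕ := (tt:ℕ) - r with hsi
          have hsib : si < K*n := by omega
          have hdm := Nat.div_add_mod si K
          have hjb : si / K < n := by
            rw [Nat.div_lt_iff_lt_mul hK, Nat.mul_comm]
            exact hsib
          have := congrFun (h3 ⟨si / K, hjb⟩) ⟨si % K, Nat.mod_lt _ hK⟩
          simp only [hbwdef] at this
          have harg : (r:ℤ) + (K:ℤ)*((si / K : ℕ):ℤ) + ((si % K : ℕ):ℤ) = ((tt:ℕ):ℤ) := by
            have hcast : ((K * (si / K) + si % K : ℕ):ℤ) = ((si:ℕ):ℤ) := by exact_mod_cast hdm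
            push_cast at hcast ⊢
            omega
          rw [harg] at this
          exact this
        · have hb2 : (tt:ℕ) - (r + K*n) < r := by omega
          have := congrFun h2 ⟨(tt:ℕ) - (r + K*n), hb2⟩
          simp only [hm2def] at this
          have harg : (r:ℤ) + (K:ℤ)*(n:ℤ) + (((tt:ℕ) - (r + K*n) : ℕ):ℤ) = ((tt:ℕ):ℤ) := by
            push_cast
            omega
          rw [harg] at this
          exact this
    have hblockN : ∀ (w : Fin ℓ → A) (j : Fin n), bw j (Nw w) ≠ p₂ := by
      intro w j
      by_cases hbc : blockCond r K p₂ (j:ℕ) (e w)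
      · have hval : ∀ t : Fin K, bw j (Nw w) t = p₁ t := by
          intro t
          show e (Nw w) ((r:ℤ) + (K:ℤ)*((j:ℕ):ℤ) + (((t:ℕ)):ℤ)) = p₁ t
          rw [heN w, NC_block_pos r K n p₁ p₂ hK (e w) (j:ℕ) (t:ℕ) j.isLt t.isLt hbc]
        intro hcon
        apply hp_ne
        funext t
        rw [← hval t, hcon]
      · have hsame : bw j (Nw w) = bw j w := by
          funext t
          show e (Nw w) _ = e w _
          rw [heN w, NC_block_neg r K n p₁ p₂ hK (e w) (j:ℕ) (t:ℕ) j.isLt t.isLt hbc]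
        rw [hsame]
        intro hcon
        apply hbc
        intro t
        exact congrFun hcon t
    set sfun := surjInv hΦsurj with hsfun
    set G : (Fin (K*n) → A) → ((Fin r → A) × (Fin r → A) × (Fin n → {g : Fin K → A // g ≠ p₂})) :=
      fun ω => (m1 (Nw (sfun ω)), m2 (Nw (sfun ω)), fun j => ⟨bw j (Nw (sfun ω)), hblockN _ j⟩) with hG
    have hGinj : Function.Injective G := by
      intro ω ω' hGe
      have h1 : m1 (Nw (sfun ω)) = m1 (Nw (sfun ω')) := congrArg Prod.fst hGe
      have h2 : m2 (Nw (sfun ω)) = m2 (Nw (sfun ω')) := congrArg (fun p => p.2.1) hGe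
      have h3 : ∀ j : Fin n, bw j (Nw (sfun ω)) = bw j (Nw (sfun ω')) := fun j =>
        congrArg Subtype.val (congrFun (congrArg (fun p => p.2.2) hGe) j)
      have hNeq := hrecon _ _ h1 h2 h3
      have hΦeq : Φ (Nw (sfun ω)) = Φ (Nw (sfun ω')) := by rw [hNeq]
      rw [hΦN, hΦN] at hΦeq
      rwa [surjInv_eq hΦsurj, surjInv_eq hΦsurj] at hΦeq
    exact Fintype.card_le_of_injective G hGinj
  -- now derive numeric contradiction
  have hcard2 : 2 ≤ Fintype.card A := Fintype.one_lt_card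
  set aC : ℕ := Fintype.card A with haC
  have hcards : ∀ n : ℕ, aC^(K*n) ≤ aC^r * (aC^r * (aC^K - 1)^n) := by
    intro n
    have hsub : Fintype.card {g : Fin K → A // g ≠ p₂} = aC^K - 1 := by
      rw [Fintype.card_subtype_compl, Fintype.card_subtype_eq, Fintype.card_fun, Fintype.card_fin]
    have hthis := key n
    simp only [Fintype.card_fun, Fintype.card_prod, Fintype.card_fin, hsub] at hthis
    exact hthis
  set Q : ℕ := aC^K with hQ
  have hQ2 : 2 ≤ Q := by
    calc 2 = 2^1 := (pow_one 2).symm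
    _ ≤ aC^1 := Nat.pow_le_pow_left hcard2 1
    _ ≤ aC^K := Nat.pow_le_pow_right (by omega) (by omega)
  -- real-number contradiction
  have hreal : ∀ n : ℕ, ((Q:ℝ))^n ≤ (aC:ℝ)^(2*r) * ((Q:ℝ) - 1)^n := by
    intro n
    have hc := hcards n
    have h1 : (1:ℕ) ≤ aC^K := Nat.one_le_pow _ _ (by omega)
    rify [h1] at hc
    calc ((Q:ℝ))^n = (aC:ℝ)^(K*n) := by rw [hQ]; push_cast; rw [← pow_mul]
    _ ≤ (aC:ℝ)^r * ((aC:ℝ)^r * (((Q:ℝ) - 1))^n) := by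
        rwa [Nat.cast_sub (show 1 ≤ Q by omega), Nat.cast_one] at hc
    _ = (aC:ℝ)^(2*r) * ((Q:ℝ) - 1)^n := by ring
  have hQR : (1:ℝ) < (Q:ℝ) := by exact_mod_cast hQ2
  have hQm0 : (0:ℝ) < (Q:ℝ) - 1 := by linarith
  set x : ℝ := 1/((Q:ℝ) - 1) with hx
  have hxpos : 0 < x := by rw [hx]; exact div_pos one_pos hQm0
  obtain ⟨n, hn⟩ := exists_nat_gt (((aC:ℝ)^(2*r)) / x)
  have hbern : 1 + (n:ℝ) * x ≤ (1 + x)^n := by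
    apply one_add_mul_le_pow
    linarith
  have hQm : (0:ℝ) < (Q:ℝ) - 1 := by linarith
  have h1x : (1:ℝ) + x = (Q:ℝ)/((Q:ℝ)-1) := by
    rw [hx]
    field_simp
    ring
  have hQn : ((Q:ℝ)/((Q:ℝ)-1))^n ≤ (aC:ℝ)^(2*r) := by
    rw [div_pow, div_le_iff₀ (pow_pos hQm n)]
    exact hreal n
  have hfinal : 1 + (n:ℝ)*x ≤ (aC:ℝ)^(2*r) := by
    calc 1 + (n:ℝ)*x ≤ (1+x)^n := hbern
    _ = ((Q:ℝ)/((Q:ℝ)-1))^n := by rw [h1x]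
    _ ≤ (aC:ℝ)^(2*r) := hQn
  have hgt : (aC:ℝ)^(2*r) < (n:ℝ) * x := by
    rw [div_lt_iff₀ hxpos] at hn
    linarith
  linarith


theorem no_gap {r P : ℕ} (hF : IsCA F) (hr : HasRadius F r) (hsurj : Surjective F)
    (hP : 0 < P) {u v : Config A} (hu : PerC P u) (hv : PerC P v) (hFuv : F u = F v)
    (i₀ : ℤ) (hwall : ∀ j : ℤ, -(r:ℤ) ≤ j → j ≤ (r:ℤ) → u (i₀ + j) = v (i₀ + j)) : u = v := by
  classical
  by_contra hne
  obtain ⟨j₀, hj₀⟩ : ∃ j₀ : ℤ, u j₀ ≠ v j₀ := by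
    by_contra h; push_neg at h; exact hne (funext h)
  have hwallk : ∀ (kk : ℤ) (j : ℤ), -(r:ℤ) ≤ j → j ≤ (r:ℤ) →
      u (i₀ + kk*P + j) = v (i₀ + kk*P + j) := by
    intro kk j hj1 hj2
    have e : i₀ + kk*P + j = (i₀ + j) + kk*P := by ring
    rw [e, perC_mul hu kk, perC_mul hv kk]
    exact hwall j hj1 hj2
  have hPz : (0:ℤ) < (P:ℤ) := by exact_mod_cast hP
  set q : ℤ := (j₀ - i₀) / P with hq
  set L : ℤ := i₀ + P * q with hLdef
  have hL1 : L ≤ j₀ ∧ j₀ < L + P := by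
    have h1 := Int.mul_ediv_add_emod (j₀ - i₀) P
    have h2 := Int.emod_nonneg (j₀ - i₀) hPz.ne'
    have h3 := Int.emod_lt_of_pos (j₀ - i₀) hPz
    constructor <;> [skip; skip] <;> · rw [hLdef, hq]; omega
  have hwL : ∀ j : ℤ, -(r:ℤ) ≤ j → j ≤ (r:ℤ) → u (L + j) = v (L + j) := by
    intro j hj1 hj2
    have e : L + j = i₀ + q*P + j := by rw [hLdef]; ring
    rw [e]; exact hwallk q j hj1 hj2
  have hwR : ∀ j : ℤ, -(r:ℤ) ≤ j → j ≤ (r:ℤ) → u (L + P + j) = v (L + P + j) := by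
    intro j hj1 hj2
    have e : L + (P:ℤ) + j = i₀ + (q+1)*P + j := by rw [hLdef]; ring
    rw [e]; exact hwallk (q+1) j hj1 hj2
  set h : Config A := fun i => if L ≤ i ∧ i < L + P then u i else v i with hh
  have hFh : F h = F v := by
    funext s
    rcases le_or_gt s L with hs | hs
    · apply hr
      intro z hz1 hz2
      show (if L ≤ z ∧ z < L + P then u z else v z) = v z
      by_cases hzin : L ≤ z ∧ z < L + P
      · rw [if_pos hzin]
        have e : z = L + (z - L) := by ring
        rw [e]; exact hwL (z - L) (by omega) (by omega)
      · rw [if_neg hzin]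
    · rcases lt_or_ge s (L + P) with hs2 | hs2
      · have hmid : F h s = F u s := by
          apply hr
          intro z hz1 hz2
          show (if L ≤ z ∧ z < L + P then u z else v z) = u z
          by_cases hzin : L ≤ z ∧ z < L + P
          · rw [if_pos hzin]
          · rw [if_neg hzin]
            rcases not_and_or.mp hzin with hz3 | hz3
            · push_neg at hz3
              have e : z = L + (z - L) := by ring
              rw [e]; exact (hwL (z - L) (by omega) (by omega)).symm
            · push_neg at hz3
              have e : z = L + P + (z - (L+P)) := by ring
              rw [e]; exact (hwR (z - (L+P)) (by omega) (by omega)).symm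
        rw [hmid]
        exact congrFun hFuv s
      · apply hr
        intro z hz1 hz2
        show (if L ≤ z ∧ z < L + P then u z else v z) = v z
        by_cases hzin : L ≤ z ∧ z < L + P
        · rw [if_pos hzin]
          have e : z = L + P + (z - (L+P)) := by ring
          rw [e]; exact hwR (z - (L+P)) (by omega) (by omega)
        · rw [if_neg hzin]
  have hhv : h = v := by
    apply preinj hF hr hsurj hFh (a := L) (b := L + P - 1)
    intro i hi
    show (if L ≤ i ∧ i < L + P then u i else v i) = v i
    rw [if_neg (by omega)]
  have : h j₀ = u j₀ := by
    show (if L ≤ j₀ ∧ j₀ < L + P then u j₀ else v j₀) = u j₀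
    rw [if_pos hL1]
  rw [hhv] at this
  exact hj₀ this.symm



theorem iter_radius {A : Type} [Fintype A] [Nonempty A] [TopologicalSpace A] [DiscreteTopology A]
    {F : Config A → Config A} {r : ℕ} (hr : HasRadius F r) :
    ∀ (t : ℕ) (x y : Config A) (i : ℤ),
      (∀ j : ℤ, i - (t*r:ℕ) ≤ j → j ≤ i + (t*r:ℕ) → x j = y j) → F^[t] x i = F^[t] y i := by
  intro t
  induction t with
  | zero => intro x y i h; exact h i (by simp) (by simp)
  | succ t ih =>
    intro x y i h
    rw [Function.iterate_succ_apply, Function.iterate_succ_apply]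
    apply ih (F x) (F y) i
    intro j hj1 hj2
    apply hr
    intro z hz1 hz2
    apply h z ?_ ?_ <;> · push_cast at hj1 hj2 ⊢; ring_nf; ring_nf at hj1 hj2; omega

end CAaux

open CAaux

theorem infinitely_many_periodic_factor_periods
    {A : Type} [Fintype A] [Nonempty A] [TopologicalSpace A] [DiscreteTopology A]
    (F : Config A → Config A) (hF : IsCA F) (hsurj : Surjective F)
    (hx : ∃ x : Config A, EquicontinuousPt F x)
    (hne : ¬ ∀ x : Config A, EquicontinuousPt F x) :
    {p : ℕ | IsPeriodicFactorPeriod F p}.Infinite := by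
  classical
  rcases subsingleton_or_nontrivial A with hss | hnt
  · exfalso
    apply hne
    intro x m
    exact ⟨0, fun y hy t k _ _ => Subsingleton.elim _ _⟩
  by_contra hSfin'
  rw [Set.not_infinite] at hSfin'
  obtain ⟨r, hr⟩ := exists_radius hF
  obtain ⟨x₀, hx₀⟩ := hx
  obtain ⟨n, hB⟩ := hx₀ r
  -- least periods give elements of the period set
  have hS_of_per : ∀ (z : Config A) (d : ℕ), 0 < d → F^[d] z = z →
      ∃ d₀ : ℕ, 0 < d₀ ∧ F^[d₀] z = z ∧ (∀ e : ℕ, 0 < e → F^[e] z = z → d₀ ≤ e) := by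
    intro z d hd hfix
    have hex : ∃ e : ℕ, 0 < e ∧ F^[e] z = z := ⟨d, hd, hfix⟩
    exact ⟨Nat.find hex, (Nat.find_spec hex).1, (Nat.find_spec hex).2,
      fun e he hfe => Nat.find_le ⟨he, hfe⟩⟩
  obtain ⟨M, hM⟩ := hSfin'.bddAbove
  set q : ℕ := Nat.factorial M with hqdef
  have hq1 : 1 ≤ q := Nat.factorial_pos M
  have hperq : ∀ z : Config A, (∃ d : ℕ, 0 < d ∧ F^[d] z = z) → F^[q] z = z := by
    rintro z ⟨d, hd, hfix⟩
    obtain ⟨d₀, hd₀, hfix₀, hmin₀⟩ := hS_of_per z d hd hfix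
    have hd₀S : IsPeriodicFactorPeriod F d₀ := stepA hd₀ hfix₀ hmin₀
    have hd₀M : d₀ ≤ M := hM hd₀S
    obtain ⟨ee, he⟩ := Nat.dvd_factorial hd₀ hd₀M
    rw [hqdef, he, Function.iterate_mul]
    exact Function.iterate_fixed hfix₀ ee
  -- eventual q-periodicity of orbits of spatially periodic points
  have hql : ∀ z : Config A, (∃ a d : ℕ, 1 ≤ d ∧ F^[a + d] z = F^[a] z) →
      ∃ a : ℕ, ∀ t : ℕ, a ≤ t → F^[t + q] z = F^[t] z := by
    rintro z ⟨a, d, hd, hfix⟩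
    have hxstar : F^[q] (F^[a] z) = F^[a] z := by
      apply hperq
      refine ⟨d, hd, ?_⟩
      rw [← Function.iterate_add_apply, show d + a = a + d from by omega]
      exact hfix
    refine ⟨a, fun t ht => ?_⟩
    calc F^[t+q] z = F^[(t-a) + q + a] z := by congr 1; omega
    _ = F^[t-a] (F^[q] (F^[a] z)) := by
        rw [Function.iterate_add_apply, Function.iterate_add_apply]
    _ = F^[t-a] (F^[a] z) := by rw [hxstar]
    _ = F^[(t-a) + a] z := by rw [Function.iterate_add_apply]
    _ = F^[t] z := by congr 1; omega
  -- wall property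
  have wall : ∀ (ξ : Config A) (i₀ : ℤ),
      (∀ j : ℤ, -(n:ℤ) ≤ j → j ≤ (n:ℤ) → ξ (i₀ + j) = x₀ j) →
      ∀ (t : ℕ) (kk : ℤ), -(r:ℤ) ≤ kk → kk ≤ (r:ℤ) → F^[t] ξ (i₀ + kk) = F^[t] x₀ kk := by
    intro ξ i₀ hξ t kk h1 h2
    have hy : ∀ j : ℤ, -(n:ℤ) ≤ j → j ≤ (n:ℤ) → (tr (-i₀) ξ) j = x₀ j := by
      intro j hj1 hj2
      show ξ (j - -i₀) = x₀ j
      rw [sub_neg_eq_add, add_comm]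
      exact hξ j hj1 hj2
    have hcol := hB (tr (-i₀) ξ) hy t kk h1 h2
    rw [tr_iter_comm hF] at hcol
    have e : F^[t] ξ (i₀ + kk) = tr (-i₀) (F^[t] ξ) kk := by
      show _ = F^[t] ξ (kk - -i₀)
      congr 1
      ring
    rw [e]
    exact hcol
  -- the periodic wall configuration
  set N₀ : ℕ := 2*n + 1 with hN₀
  have hN₀pos : 0 < N₀ := by omega
  set ystar : Config A := fun j => x₀ (((j + n) % (N₀:ℤ)) - n) with hystar
  have hyper : PerC N₀ ystar := by
    intro i
    show x₀ _ = x₀ _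
    congr 2
    have e : i + (N₀:ℤ) + n = (i + n) + (N₀:ℤ)*1 := by ring
    rw [e, Int.add_mul_emod_self_left]
  have hyB : ∀ j : ℤ, -(n:ℤ) ≤ j → j ≤ (n:ℤ) → ystar ((0:ℤ) + j) = x₀ j := by
    intro j hj1 hj2
    show x₀ _ = x₀ j
    congr 1
    rw [zero_add]
    have h1 : 0 ≤ j + n := by omega
    have h2 : j + n < (N₀:ℤ) := by push_cast [hN₀]; omega
    rw [Int.emod_eq_of_lt h1 h2]
    ring
  -- column eventual q-periodicity
  obtain ⟨T, hT⟩ := hql ystar (by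
    obtain ⟨a, d, hd, hfix⟩ := eventually_periodic hF hN₀pos hyper
    exact ⟨a, d, hd, hfix⟩)
  have hcol : ∀ t : ℕ, T ≤ t → ∀ kk : ℤ, -(r:ℤ) ≤ kk → kk ≤ (r:ℤ) →
      F^[t + q] x₀ kk = F^[t] x₀ kk := by
    intro t ht kk h1 h2
    have ha := wall ystar 0 hyB (t+q) kk h1 h2
    have hb := wall ystar 0 hyB t kk h1 h2
    rw [← ha, ← hb, hT t ht]
  -- master lemma: spatially periodic configs containing the wall word
  have master : ∀ (P : ℕ), 0 < P → ∀ (z : Config A) (i₀ : ℤ), PerC P z →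
      (∀ j : ℤ, -(n:ℤ) ≤ j → j ≤ (n:ℤ) → z (i₀ + j) = x₀ j) →
      F^[T + q] z = F^[T] z := by
    intro P hP z i₀ hzP hzB
    obtain ⟨az, haz⟩ := hql z (by
      obtain ⟨a, d, hd, hfix⟩ := eventually_periodic hF hP hzP
      exact ⟨a, d, hd, hfix⟩)
    have step : ∀ t : ℕ, T ≤ t → F^[t + 1 + q] z = F^[t + 1] z → F^[t + q] z = F^[t] z := by
      intro t ht hstep
      have hu := perC_iter hF hzP t
      have hv := perC_iter hF hzP (t+q)
      have hFeq : F (F^[t+q] z) = F (F^[t] z) := by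
        rw [← Function.iterate_succ_apply' F (t+q) z, ← Function.iterate_succ_apply' F t z]
        show F^[t+q+1] z = F^[t+1] z
        rw [show t+q+1 = t+1+q from by omega]
        exact hstep
      have hwalls : ∀ j : ℤ, -(r:ℤ) ≤ j → j ≤ (r:ℤ) →
          F^[t+q] z (i₀ + j) = F^[t] z (i₀ + j) := by
        intro j h1 h2
        rw [wall z i₀ hzB (t+q) j h1 h2, wall z i₀ hzB t j h1 h2]
        exact hcol t ht j h1 h2
      exact no_gap hF hr hsurj hP hv hu hFeq i₀ hwalls
    have down : ∀ i : ℕ, ∀ t : ℕ, T ≤ t → F^[t + i + q] z = F^[t + i] z →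
        F^[t + q] z = F^[t] z := by
      intro i
      induction i with
      | zero => intro t ht h0; simpa using h0
      | succ i ih =>
        intro t ht hsucc
        rw [show t + (i+1) = t + i + 1 from by omega] at hsucc
        exact ih t ht (step (t+i) (by omega) hsucc)
    exact down az T le_rfl (haz (T + az) (by omega))
  -- global equality F^[T+q] = F^[T]
  have hglob : ∀ x : Config A, F^[T + q] x = F^[T] x := by
    intro x
    funext k₀
    set Nb : ℕ := k₀.natAbs + (T+q)*r with hNb
    set P : ℕ := (2*Nb + 1) + (2*n + 1) with hPdef
    have hP : 0 < P := by omega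
    set i₀ : ℤ := (Nb:ℤ) + n + 1 with hi₀
    set z : Config A := fun j =>
      if ((j + Nb) % (P:ℤ)) - Nb ≤ (Nb:ℤ) then x (((j + Nb) % (P:ℤ)) - Nb)
      else x₀ ((((j + Nb) % (P:ℤ)) - Nb) - i₀) with hz
    have hPz : (0:ℤ) < (P:ℤ) := by exact_mod_cast hP
    have hzP : PerC P z := by
      intro i
      show (if _ then _ else _) = (if _ then _ else _)
      have e : i + (P:ℤ) + Nb = (i + Nb) + (P:ℤ)*1 := by ring
      rw [e, Int.add_mul_emod_self_left]
    have hzx : ∀ j : ℤ, -(Nb:ℤ) ≤ j → j ≤ (Nb:ℤ) → z j = x j := by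
      intro j h1 h2
      show (if _ then _ else _) = x j
      have hm : (j + Nb) % (P:ℤ) = j + Nb := by
        apply Int.emod_eq_of_lt (by omega)
        push_cast [hPdef]
        omega
      rw [hm, if_pos (by omega)]
      congr 1
      ring
    have hzB : ∀ j : ℤ, -(n:ℤ) ≤ j → j ≤ (n:ℤ) → z (i₀ + j) = x₀ j := by
      intro j h1 h2
      show (if _ then _ else _) = x₀ j
      have hm : (i₀ + j + Nb) % (P:ℤ) = i₀ + j + Nb := by
        apply Int.emod_eq_of_lt (by push_cast [hi₀]; omega)
        push_cast [hPdef, hi₀]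
        omega
      rw [hm, if_neg (by push_cast [hi₀]; omega)]
      congr 1
      push_cast [hi₀]
      ring
    have h1 : F^[T+q] x k₀ = F^[T+q] z k₀ := by
      apply iter_radius hr
      intro j hj1 hj2
      exact (hzx j (by omega) (by omega)).symm
    have h2 : F^[T] x k₀ = F^[T] z k₀ := by
      apply iter_radius hr
      intro j hj1 hj2
      have hmul : (T*r : ℕ) ≤ ((T+q)*r : ℕ) := Nat.mul_le_mul_right r (by omega)
      exact (hzx j (by omega) (by omega)).symm
    rw [h1, h2, master P hP z i₀ hzP hzB]
  -- iterate reduction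
  have hmod : ∀ s : ℕ, F^[T + s] = F^[T + s % q] := by
    intro s
    induction s using Nat.strong_induction_on with
    | _ s ih =>
      rcases Nat.lt_or_ge s q with h | h
      · rw [Nat.mod_eq_of_lt h]
      · have e1 : T + s = (T + q) + (s - q) := by omega
        rw [e1, Function.iterate_add, show F^[T+q] = F^[T] from funext hglob,
          ← Function.iterate_add, ih (s - q) (by omega)]
        congr 1
        rw [Nat.mod_eq_sub_mod h]
  -- everything is an equicontinuity point: contradiction
  exfalso
  apply hne
  intro x m
  refine ⟨m + (T+q)*r, ?_⟩
  intro y hy t k hk1 hk2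
  have hbound : ∀ t' : ℕ, t' ≤ T + q → F^[t'] y k = F^[t'] x k := by
    intro t' ht'
    apply iter_radius hr
    intro j hj1 hj2
    have hmul : (t'*r : ℕ) ≤ ((T+q)*r : ℕ) := Nat.mul_le_mul_right r ht'
    apply hy j ?_ ?_ <;> omega
  rcases Nat.lt_or_ge t (T + q) with h | h
  · exact hbound t (by omega)
  · rw [show t = T + (t - T) from by omega, hmod (t - T)]
    exact hbound (T + (t-T) % q) (by
      have := Nat.mod_lt (t-T) (show 0 < q from hq1)
      omega)
end

section
/- Let F be a cellular automaton and let μ be a Borel probability measure on A^ℤ that is F-invariant and ergodic with respect to the shift σ. If F has at least one μ-equicontinuous point, then the set of F-periodic points (points y with F^p(y) = y for some p > 0) is dense in the topological support of μ. -/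
open Function Set MeasureTheory Filter

/-- The central cylinder `[x(−n,n)]_{−n}`. -/
def centerCyl {A : Type*} (x : Config A) (n : ℕ) : Set (Config A) :=
  {y | ∀ k : ℤ, -(n : ℤ) ≤ k → k ≤ (n : ℤ) → y k = x k}

/-- `x` is a `μ`-equicontinuous point of `F`: for every `m > 0`,
`μ([x(−n,n)]_{−n} ∩ B_{[−m,m]}(x)) / μ([x(−n,n)]_{−n}) → 1` as `n → ∞`. -/
def MuEquicontinuousPt {A : Type*} [MeasurableSpace A]
    (F : Config A → Config A) (μ : Measure (Config A)) (x : Config A) : Prop :=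
  ∀ m : ℕ, 0 < m →
    Tendsto (fun n : ℕ =>
        μ (centerCyl x n ∩ Bset F (-(m : ℤ)) (m : ℤ) x) / μ (centerCyl x n))
      atTop (nhds 1)

/-- The topological support of `μ`: points all of whose open neighbourhoods have
positive measure. -/
def supportOf {A : Type*} [TopologicalSpace A] [MeasurableSpace A]
    (μ : Measure (Config A)) : Set (Config A) :=
  {x | ∀ U : Set (Config A), IsOpen U → x ∈ U → 0 < μ U}

/-! ### Auxiliary shift algebra -/

/-- Shift by an arbitrary integer. -/
def shiftn {A : Type*} (t : ℤ) (x : Config A) : Config A := fun i => x (i + t)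

lemma shiftn_shiftn {A : Type*} (s t : ℤ) (x : Config A) :
    shiftn s (shiftn t x) = shiftn (s + t) x := by
  funext i; simp [shiftn, add_assoc]

lemma shiftn_zero {A : Type*} (x : Config A) : shiftn 0 x = x := by
  funext i; simp [shiftn]

lemma shift_eq_shiftn {A : Type*} (x : Config A) : shift x = shiftn 1 x := rfl

lemma ca_shiftn {A : Type*} {F : Config A → Config A}
    (hF : F ∘ shift = shift ∘ F) : ∀ (t : ℤ) (x : Config A),
    F (shiftn t x) = shiftn t (F x) := by
  have h1 : ∀ x : Config A, F (shiftn 1 x) = shiftn 1 (F x) := by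
    intro x
    have := congrFun hF x
    simpa [Function.comp, shift_eq_shiftn] using this
  have hneg : ∀ x : Config A, F (shiftn (-1) x) = shiftn (-1) (F x) := by
    intro x
    have h2 : F x = shiftn 1 (F (shiftn (-1) x)) := by
      have : x = shiftn 1 (shiftn (-1) x) := by
        rw [shiftn_shiftn]; norm_num [shiftn_zero]
      nth_rewrite 1 [this]
      exact h1 _
    calc F (shiftn (-1) x) = shiftn (-1) (shiftn 1 (F (shiftn (-1) x))) := by
          rw [shiftn_shiftn]; norm_num [shiftn_zero]
      _ = shiftn (-1) (F x) := by rw [← h2]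
  intro t
  induction t using Int.induction_on with
  | zero => intro x; simp [shiftn_zero]
  | succ n ih =>
      intro x
      have : ((n : ℤ) + 1) = 1 + n := by ring
      rw [this]
      calc F (shiftn (1 + n) x) = F (shiftn 1 (shiftn n x)) := by rw [shiftn_shiftn]
        _ = shiftn 1 (F (shiftn n x)) := h1 _
        _ = shiftn 1 (shiftn n (F x)) := by rw [ih]
        _ = shiftn (1 + n) (F x) := by rw [shiftn_shiftn]
  | pred n ih =>
      intro x
      have : (-(n : ℤ) - 1) = (-1) + (-n) := by ring
      rw [this]
      calc F (shiftn (-1 + -n) x) = F (shiftn (-1) (shiftn (-n) x)) := by rw [shiftn_shiftn]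
        _ = shiftn (-1) (F (shiftn (-n) x)) := hneg _
        _ = shiftn (-1) (shiftn (-n) (F x)) := by rw [ih]
        _ = shiftn (-1 + -n) (F x) := by rw [shiftn_shiftn]

lemma ca_iterate_shiftn {A : Type*} {F : Config A → Config A}
    (hF : F ∘ shift = shift ∘ F) : ∀ (j : ℕ) (t : ℤ) (x : Config A),
    F^[j] (shiftn t x) = shiftn t (F^[j] x) := by
  intro j
  induction j with
  | zero => intro t x; simp
  | succ j ih =>
      intro t x
      rw [Function.iterate_succ_apply', Function.iterate_succ_apply', ih, ca_shiftn hF]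

lemma shift_iterate_eq {A : Type*} (n : ℕ) (x : Config A) :
    shift^[n] x = shiftn (n : ℤ) x := by
  induction n with
  | zero => simp [shiftn_zero]
  | succ n ih =>
      rw [Function.iterate_succ_apply', ih, shift_eq_shiftn, shiftn_shiftn]
      congr 1
      push_cast
      ring

/-! ### Cylinders -/

lemma self_mem_centerCyl {A : Type*} (x : Config A) (n : ℕ) : x ∈ centerCyl x n :=
  fun _ _ _ => rfl

lemma centerCyl_eq {A : Type*} (x : Config A) (n : ℕ) :
    centerCyl x n = ⋂ k ∈ Finset.Icc (-(n:ℤ)) (n:ℤ), {y : Config A | y k = x k} := by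
  ext y
  simp only [centerCyl, Set.mem_setOf_eq, Set.mem_iInter, Finset.mem_Icc]
  constructor
  · rintro h k ⟨h1, h2⟩; exact h k h1 h2
  · intro h k h1 h2; exact h k ⟨h1, h2⟩

lemma isOpen_centerCyl {A : Type*} [TopologicalSpace A] [DiscreteTopology A]
    (x : Config A) (n : ℕ) : IsOpen (centerCyl x n) := by
  rw [centerCyl_eq]
  refine isOpen_biInter_finset fun k _ => ?_
  have : {y : Config A | y k = x k} = (fun y : Config A => y k) ⁻¹' {x k} := rfl
  rw [this]
  exact (continuous_apply k).isOpen_preimage _ (isOpen_discrete _)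

lemma measurableSet_centerCyl {A : Type*} [TopologicalSpace A] [DiscreteTopology A]
    [MeasurableSpace A] [BorelSpace A] (x : Config A) (n : ℕ) :
    MeasurableSet (centerCyl x n) := by
  rw [centerCyl_eq]
  refine MeasurableSet.biInter (Finset.countable_toSet _) fun k _ => ?_
  have : {y : Config A | y k = x k} = (fun y : Config A => y k) ⁻¹' {x k} := rfl
  rw [this]
  exact (measurable_pi_apply k) ((isOpen_discrete ({x k} : Set A)).measurableSet)

lemma exists_centerCyl_subset {A : Type*} [TopologicalSpace A]
    {U : Set (Config A)} (hU : IsOpen U) {x : Config A} (hx : x ∈ U) :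
    ∃ n : ℕ, centerCyl x n ⊆ U := by
  rcases isOpen_pi_iff.mp hU x hx with ⟨I, u, h1, h2⟩
  refine ⟨I.sup Int.natAbs, fun y hy => h2 ?_⟩
  intro a ha
  have hle : a.natAbs ≤ I.sup Int.natAbs := Finset.le_sup ha
  have h3 : y a = x a := by
    refine hy a ?_ ?_
    · omega
    · omega
  rw [h3]
  exact (h1 a ha).2

/-! ### Local rule (Curtis–Hedlund–Lyndon) -/

lemma exists_radius {A : Type} [Fintype A] [TopologicalSpace A] [DiscreteTopology A]
    {F : Config A → Config A} (hF : IsCA F) :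
    ∃ r : ℕ, ∀ x y : Config A, ∀ i : ℤ,
      (∀ s : ℤ, -(r:ℤ) ≤ s → s ≤ r → x (i + s) = y (i + s)) → F x i = F y i := by
  have hcont : ∀ x : Config A, ∃ n : ℕ,
      centerCyl x n ⊆ {y : Config A | F y 0 = F x 0} := by
    intro x
    have hopen : IsOpen {y : Config A | F y 0 = F x 0} := by
      have : Continuous fun y : Config A => F y 0 := (continuous_apply 0).comp hF.1
      exact this.isOpen_preimage {F x 0} (isOpen_discrete _)
    exact exists_centerCyl_subset hopen rfl
  choose nn hnn using hcont
  obtain ⟨t, ht⟩ := IsCompact.elim_nhds_subcover isCompact_univ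
    (fun x => centerCyl x (nn x))
    (fun x _ => (isOpen_centerCyl x (nn x)).mem_nhds (self_mem_centerCyl x (nn x)))
  set r : ℕ := t.sup nn with hr
  have key : ∀ u v : Config A,
      (∀ s : ℤ, -(r:ℤ) ≤ s → s ≤ r → u s = v s) → F u 0 = F v 0 := by
    intro u v huv
    have hu : u ∈ ⋃ x ∈ t, centerCyl x (nn x) := ht.2 (Set.mem_univ u)
    simp only [Set.mem_iUnion] at hu
    obtain ⟨x, hxt, hux⟩ := hu
    have hnx : nn x ≤ r := Finset.le_sup hxt
    have hvx : v ∈ centerCyl x (nn x) := by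
      intro k h1 h2
      have : v k = u k := (huv k (by omega) (by omega)).symm
      rw [this]; exact hux k h1 h2
    have e1 : F u 0 = F x 0 := hnn x hux
    have e2 : F v 0 = F x 0 := hnn x hvx
    rw [e1, e2]
  refine ⟨r, fun x y i hagree => ?_⟩
  have e1 : F x i = F (shiftn i x) 0 := by
    rw [ca_shiftn hF.2]; simp [shiftn]
  have e2 : F y i = F (shiftn i y) 0 := by
    rw [ca_shiftn hF.2]; simp [shiftn]
  rw [e1, e2]
  refine key _ _ fun s h1 h2 => ?_
  show x (s + i) = y (s + i)
  have := hagree s h1 h2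
  rw [show s + i = i + s by ring]
  exact this

/-! ### The wall / splicing lemma -/

lemma wall_splice {A : Type} {F : Config A → Config A} {r m : ℕ}
    (hloc : ∀ x y : Config A, ∀ i : ℤ,
      (∀ s : ℤ, -(r:ℤ) ≤ s → s ≤ r → x (i + s) = y (i + s)) → F x i = F y i)
    (hrm : r ≤ m) (hm : 1 ≤ m)
    {k1 k2 p : ℤ} (hp : p = k2 - k1) (hp2 : 2 * (m:ℤ) ≤ p)
    {xstar y z : Config A}
    (hw1 : ∀ (j:ℕ) (s:ℤ), -(m:ℤ) ≤ s → s ≤ m → F^[j] y (k1 + s) = F^[j] xstar s)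
    (hw2 : ∀ (j:ℕ) (s:ℤ), -(m:ℤ) ≤ s → s ≤ m → F^[j] y (k2 + s) = F^[j] xstar s)
    (hzper : ∀ (j:ℕ) (i:ℤ), F^[j] z (i + p) = F^[j] z i)
    (hagree : ∀ i : ℤ, k1 ≤ i → i < k2 → z i = y i) :
    ∀ (j:ℕ) (i:ℤ), k1 - m ≤ i → i ≤ k2 + m → F^[j] z i = F^[j] y i := by
  have hrm' : (r:ℤ) ≤ (m:ℤ) := by exact_mod_cast hrm
  have hm' : (1:ℤ) ≤ (m:ℤ) := by exact_mod_cast hm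
  -- reformulated walls
  have hw1' : ∀ (j:ℕ) (t:ℤ), k1 - m ≤ t → t ≤ k1 + m → F^[j] y t = F^[j] xstar (t - k1) := by
    intro j t h1 h2
    have := hw1 j (t - k1) (by omega) (by omega)
    rwa [show k1 + (t - k1) = t by ring] at this
  have hw2' : ∀ (j:ℕ) (t:ℤ), k2 - m ≤ t → t ≤ k2 + m → F^[j] y t = F^[j] xstar (t - k2) := by
    intro j t h1 h2
    have := hw2 j (t - k2) (by omega) (by omega)
    rwa [show k2 + (t - k2) = t by ring] at this
  intro j
  induction j with
  | zero =>
      intro i h1 h2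
      simp only [Function.iterate_zero_apply]
      rcases lt_or_ge i k1 with hik | hik
      · -- i ∈ [k1 - m, k1)
        have e1 : z i = z (i + p) := (hzper 0 i).symm
        have e2 : z (i + p) = y (i + p) := hagree _ (by omega) (by omega)
        have e3 : y (i + p) = xstar (i + p - k2) := by
          have := hw2' 0 (i + p) (by omega) (by omega)
          simpa using this
        have e4 : y i = xstar (i - k1) := by
          have := hw1' 0 i (by omega) (by omega)
          simpa using this
        rw [e1, e2, e3, e4, show i + p - k2 = i - k1 by omega]
      rcases lt_or_ge i k2 with hik2 | hik2
      · exact hagree i hik hik2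
      · -- i ∈ [k2, k2 + m]
        have e1 : z i = z (i - p) := by
          have h := hzper 0 (i - p)
          simp only [Function.iterate_zero_apply] at h
          rw [show i - p + p = i by ring] at h
          exact h
        have e2 : z (i - p) = y (i - p) := hagree _ (by omega) (by omega)
        have e3 : y (i - p) = xstar (i - p - k1) := by
          have := hw1' 0 (i - p) (by omega) (by omega)
          simpa using this
        have e4 : y i = xstar (i - k2) := by
          have := hw2' 0 i (by omega) (by omega)
          simpa using this
        rw [e1, e2, e3, e4, show i - p - k1 = i - k2 by omega]
  | succ j ih =>
      have hmid : ∀ i : ℤ, k1 - m + r ≤ i → i ≤ k2 + m - r → F^[j+1] z i = F^[j+1] y i := by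
        intro i h1 h2
        rw [Function.iterate_succ_apply', Function.iterate_succ_apply']
        exact hloc _ _ i (fun s hs1 hs2 => ih (i + s) (by omega) (by omega))
      intro i h1 h2
      rcases lt_or_ge i (k1 - m + r) with hlow | hlow
      · -- low edge
        have e1 : F^[j+1] z i = F^[j+1] z (i + p) := (hzper (j+1) i).symm
        have e2 : F^[j+1] z (i + p) = F^[j+1] y (i + p) := hmid _ (by omega) (by omega)
        have e3 : F^[j+1] y (i + p) = F^[j+1] xstar (i + p - k2) :=
          hw2' (j+1) _ (by omega) (by omega)
        have e4 : F^[j+1] y i = F^[j+1] xstar (i - k1) :=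
          hw1' (j+1) i (by omega) (by omega)
        rw [e1, e2, e3, e4, show i + p - k2 = i - k1 by omega]
      rcases le_or_gt i (k2 + m - r) with hhigh | hhigh
      · exact hmid i hlow hhigh
      · -- high edge
        have e1 : F^[j+1] z i = F^[j+1] z (i - p) := by
          have h := hzper (j+1) (i - p)
          rw [show i - p + p = i by ring] at h
          exact h
        have e2 : F^[j+1] z (i - p) = F^[j+1] y (i - p) := hmid _ (by omega) (by omega)
        have e3 : F^[j+1] y (i - p) = F^[j+1] xstar (i - p - k1) :=
          hw1' (j+1) _ (by omega) (by omega)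
        have e4 : F^[j+1] y i = F^[j+1] xstar (i - k2) :=
          hw2' (j+1) i (by omega) (by omega)
        rw [e1, e2, e3, e4, show i - p - k1 = i - k2 by omega]

/-- Two `p`-periodic configurations agreeing on a fundamental domain agree everywhere. -/
lemma periodic_ext {A : Type} {p k1 k2 : ℤ} (hp : p = k2 - k1) (hppos : 0 < p)
    {w1 w2 : Config A}
    (h1 : ∀ i, w1 (i + p) = w1 i) (h2 : ∀ i, w2 (i + p) = w2 i)
    (hagr : ∀ i, k1 ≤ i → i < k2 → w1 i = w2 i) : w1 = w2 := by
  have hmul : ∀ (w : Config A), (∀ i, w (i + p) = w i) → ∀ (t : ℤ) (i : ℤ), w (i + t * p) = w i := by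
    intro w hw t
    induction t using Int.induction_on with
    | zero => intro i; simp
    | succ n ihn =>
        intro i
        have : i + ((n:ℤ) + 1) * p = (i + n * p) + p := by ring
        rw [this, hw, ihn]
    | pred n ihn =>
        intro i
        have : i + (-(n:ℤ) - 1) * p = (i - p) + (-(n:ℤ)) * p := by ring
        rw [this, ihn]
        have := hw (i - p)
        rw [show i - p + p = i by ring] at this
        exact this.symm
  funext i
  have hrem0 : 0 ≤ (i - k1) % p := Int.emod_nonneg _ (by omega)
  have hrem1 : (i - k1) % p < p := Int.emod_lt_of_pos _ hppos
  have hdecomp : i = (k1 + (i - k1) % p) + ((i - k1) / p) * p := by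
    have h := Int.emod_add_mul_ediv (i - k1) p
    rw [mul_comm p ((i - k1) / p)] at h
    omega
  calc w1 i = w1 ((k1 + (i - k1) % p) + ((i - k1) / p) * p) := by rw [← hdecomp]
    _ = w1 (k1 + (i - k1) % p) := hmul w1 h1 _ _
    _ = w2 (k1 + (i - k1) % p) := hagr _ (by omega) (by omega)
    _ = w2 ((k1 + (i - k1) % p) + ((i - k1) / p) * p) := (hmul w2 h2 _ _).symm
    _ = w2 i := by rw [← hdecomp]

/-! ### Wall sets -/

/-- The set of configurations having a "wall" at position `k` whose column equals the
column of `xstar` at the origin. -/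
def Wset {A : Type} (F : Config A → Config A) (m : ℕ) (xstar : Config A) (k : ℤ) :
    Set (Config A) :=
  {y | ∀ (j : ℕ) (s : ℤ), -(m:ℤ) ≤ s → s ≤ m → F^[j] y (k + s) = F^[j] xstar s}

lemma Bset_eq_Wset_zero {A : Type} (F : Config A → Config A) (m : ℕ) (xstar : Config A) :
    Bset F (-(m:ℤ)) (m:ℤ) xstar = Wset F m xstar 0 := by
  ext y
  constructor
  · intro h j s h1 h2
    rw [zero_add]; exact h j s h1 h2
  · intro h j s h1 h2
    have := h j s h1 h2
    rwa [zero_add] at this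

lemma mem_Wset_shiftn {A : Type} {F : Config A → Config A}
    (hF : F ∘ shift = shift ∘ F) (m : ℕ) (xstar : Config A) (t k : ℤ) (y : Config A) :
    shiftn t y ∈ Wset F m xstar k ↔ y ∈ Wset F m xstar (k + t) := by
  constructor
  · intro h j s h1 h2
    have := h j s h1 h2
    rw [ca_iterate_shiftn hF] at this
    rwa [show k + t + s = (k + s) + t by ring]
    -- `this : shiftn t (F^[j] y) (k + s) = F^[j] xstar s`, i.e. `F^[j] y (k + s + t) = _`
  · intro h j s h1 h2
    rw [ca_iterate_shiftn hF]
    show F^[j] y (k + s + t) = F^[j] xstar s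
    rw [show k + s + t = (k + t) + s by ring]
    exact h j s h1 h2

lemma continuous_shiftn {A : Type} [TopologicalSpace A] (t : ℤ) :
    Continuous (shiftn t : Config A → Config A) :=
  continuous_pi fun i => continuous_apply (i + t)

lemma measurableSet_Wset {A : Type} [Countable A] [TopologicalSpace A] [DiscreteTopology A]
    [MeasurableSpace A] [BorelSpace A]
    {F : Config A → Config A} (hFc : Continuous F) (m : ℕ) (xstar : Config A) (k : ℤ) :
    MeasurableSet (Wset F m xstar k) := by
  have : Wset F m xstar k =
      ⋂ (j : ℕ), ⋂ (s : ℤ), {y : Config A | -(m:ℤ) ≤ s → s ≤ m → F^[j] y (k + s) = F^[j] xstar s} := by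
    ext y; simp [Wset, Set.mem_iInter]
  rw [this]
  refine MeasurableSet.iInter fun j => MeasurableSet.iInter fun s => ?_
  by_cases h1 : -(m:ℤ) ≤ s ∧ s ≤ m
  · have he : {y : Config A | -(m:ℤ) ≤ s → s ≤ m → F^[j] y (k + s) = F^[j] xstar s}
        = (fun y : Config A => F^[j] y (k + s)) ⁻¹' {F^[j] xstar s} := by
      ext y; simp [h1.1, h1.2]
    rw [he]
    exact ((measurable_pi_apply (k + s)).comp (hFc.measurable.iterate j))
      ((isOpen_discrete ({F^[j] xstar s} : Set A)).measurableSet)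
  · have he : {y : Config A | -(m:ℤ) ≤ s → s ≤ m → F^[j] y (k + s) = F^[j] xstar s}
        = Set.univ := by
      ext y; simp only [Set.mem_setOf_eq, Set.mem_univ, iff_true]
      intro hs1 hs2; exact absurd ⟨hs1, hs2⟩ h1
    rw [he]; exact MeasurableSet.univ

lemma shiftInv_iterate_eq {A : Type} (n : ℕ) (x : Config A) :
    (shiftn (-1))^[n] x = shiftn (-(n : ℤ)) x := by
  induction n with
  | zero => simp [shiftn_zero]
  | succ n ih =>
      rw [Function.iterate_succ_apply', ih, shiftn_shiftn]
      congr 1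
      push_cast
      ring

lemma measurePreserving_shiftInv {A : Type} [Countable A] [TopologicalSpace A] [DiscreteTopology A]
    [MeasurableSpace A] [BorelSpace A] {μ : Measure (Config A)}
    (hmp : MeasurePreserving (shift : Config A → Config A) μ μ) :
    MeasurePreserving (shiftn (-1) : Config A → Config A) μ μ := by
  have hmeas : Measurable (shiftn (-1) : Config A → Config A) :=
    (continuous_shiftn (-1)).measurable
  refine ⟨hmeas, ?_⟩
  refine Measure.ext fun E hE => ?_
  rw [Measure.map_apply hmeas hE]
  have hkey : shift ⁻¹' (shiftn (-1) ⁻¹' E) = E := by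
    ext y
    have : shiftn (-1) (shift y) = y := by
      rw [shift_eq_shiftn, shiftn_shiftn, show (-1 : ℤ) + 1 = 0 by ring, shiftn_zero]
    simp [Set.mem_preimage, this]
  calc μ (shiftn (-1) ⁻¹' E) = μ (shift ⁻¹' (shiftn (-1) ⁻¹' E)) :=
        (hmp.measure_preimage ((hmeas hE).nullMeasurableSet)).symm
    _ = μ E := by rw [hkey]

/-! ### Full measure of configurations with walls arbitrarily far on both sides -/

lemma ginf_conull {A : Type} [Countable A] [TopologicalSpace A] [DiscreteTopology A]
    [MeasurableSpace A] [BorelSpace A]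
    {F : Config A → Config A} (hF : IsCA F)
    {μ : Measure (Config A)} [IsProbabilityMeasure μ]
    (herg : Ergodic shift μ) (m : ℕ) (xstar : Config A)
    (hB : μ (Wset F m xstar 0) ≠ 0) :
    μ {y : Config A | ∀ N : ℕ, (∃ k : ℤ, (N:ℤ) ≤ k ∧ y ∈ Wset F m xstar k) ∧
        (∃ k : ℤ, k ≤ -(N:ℤ) ∧ y ∈ Wset F m xstar k)}ᶜ = 0 := by
  set W : ℤ → Set (Config A) := Wset F m xstar with hW
  set G : Set (Config A) := {y : Config A | ∀ N : ℕ, (∃ k : ℤ, (N:ℤ) ≤ k ∧ y ∈ W k) ∧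
      (∃ k : ℤ, k ≤ -(N:ℤ) ∧ y ∈ W k)} with hG
  have hWmeas : ∀ k, MeasurableSet (W k) := measurableSet_Wset hF.1 m xstar
  have hGmeas : MeasurableSet G := by
    have : G = ⋂ (N : ℕ),
        ((⋃ (k : ℤ), ⋃ (_ : (N:ℤ) ≤ k), W k) ∩ (⋃ (k : ℤ), ⋃ (_ : k ≤ -(N:ℤ)), W k)) := by
      ext y
      simp only [hG, Set.mem_setOf_eq, Set.mem_iInter, Set.mem_inter_iff, Set.mem_iUnion,
        exists_prop]
    rw [this]
    exact MeasurableSet.iInter fun N =>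
      (MeasurableSet.iUnion fun k => MeasurableSet.iUnion fun _ => hWmeas k).inter
      (MeasurableSet.iUnion fun k => MeasurableSet.iUnion fun _ => hWmeas k)
  have hshiftW : ∀ (k : ℤ) (y : Config A), shift y ∈ W k ↔ y ∈ W (k + 1) := by
    intro k y
    have := mem_Wset_shiftn hF.2 m xstar 1 k y
    rwa [← shift_eq_shiftn] at this
  have hGinv : shift ⁻¹' G = G := by
    ext y
    simp only [Set.mem_preimage, hG, Set.mem_setOf_eq]
    constructor
    · intro h N
      constructor
      · obtain ⟨k, hk, hw⟩ := (h N).1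
        exact ⟨k + 1, by omega, (hshiftW k y).mp hw⟩
      · obtain ⟨k, hk, hw⟩ := (h (N + 1)).2
        refine ⟨k + 1, ?_, (hshiftW k y).mp hw⟩
        push_cast at hk ⊢
        omega
    · intro h N
      constructor
      · obtain ⟨k, hk, hw⟩ := (h (N + 1)).1
        refine ⟨k - 1, ?_, ?_⟩
        · push_cast at hk ⊢; omega
        · rw [hshiftW (k - 1) y, show k - 1 + 1 = k by ring]; exact hw
      · obtain ⟨k, hk, hw⟩ := (h N).2
        refine ⟨k - 1, by omega, ?_⟩
        rw [hshiftW (k - 1) y, show k - 1 + 1 = k by ring]; exact hw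
  -- Poincaré recurrence in both directions
  have hcons := herg.toMeasurePreserving.conservative
  have hconsInv := (measurePreserving_shiftInv herg.toMeasurePreserving).conservative
  have hfw := hcons.ae_mem_imp_frequently_image_mem (hWmeas 0).nullMeasurableSet
  have hbw := hconsInv.ae_mem_imp_frequently_image_mem (hWmeas 0).nullMeasurableSet
  have hae : ∀ᵐ y ∂μ, y ∈ W 0 → y ∈ G := by
    filter_upwards [hfw, hbw] with y hf hb hy
    intro N
    constructor
    · obtain ⟨n, hn, hmem⟩ := Filter.frequently_atTop.mp (hf hy) N
      rw [shift_iterate_eq] at hmem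
      have := (mem_Wset_shiftn hF.2 m xstar (n:ℤ) 0 y).mp hmem
      exact ⟨0 + (n:ℤ), by push_cast; omega, this⟩
    · obtain ⟨n, hn, hmem⟩ := Filter.frequently_atTop.mp (hb hy) N
      rw [shiftInv_iterate_eq] at hmem
      have := (mem_Wset_shiftn hF.2 m xstar (-(n:ℤ)) 0 y).mp hmem
      exact ⟨0 + -(n:ℤ), by push_cast; omega, this⟩
  have hnull : μ (W 0 \ G) = 0 := by
    refine measure_mono_null ?_ (ae_iff.mp hae)
    intro y hy
    simp only [Set.mem_setOf_eq]
    intro himp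
    exact hy.2 (himp hy.1)
  have hle : μ (W 0) ≤ μ G := by
    calc μ (W 0) ≤ μ (W 0 ∩ G) + μ (W 0 \ G) := measure_le_inter_add_diff μ _ _
      _ = μ (W 0 ∩ G) := by rw [hnull, add_zero]
      _ ≤ μ G := measure_mono Set.inter_subset_right
  have hGne : μ G ≠ 0 := fun h => hB (le_antisymm (h ▸ hle) zero_le)
  rcases herg.toPreErgodic.ae_empty_or_univ hGmeas hGinv with h | h
  · exact absurd (ae_eq_empty.mp h) hGne
  · exact ae_eq_univ.mp h

theorem periodic_points_dense_in_support
    {A : Type} [Fintype A] [Nonempty A] [TopologicalSpace A] [DiscreteTopology A]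
    [MeasurableSpace A] [BorelSpace A]
    (F : Config A → Config A) (hF : IsCA F)
    (μ : Measure (Config A)) [IsProbabilityMeasure μ]
    (hinv : ∀ E : Set (Config A), MeasurableSet E → μ (F ⁻¹' E) = μ E)
    (herg : Ergodic shift μ)
    (hx : ∃ x : Config A, MuEquicontinuousPt F μ x) :
    supportOf μ ⊆ closure {y : Config A | ∃ p : ℕ, 0 < p ∧ F^[p] y = y} := by
  classical
  obtain ⟨xs, hxs⟩ := hx
  obtain ⟨r, hloc⟩ := exists_radius hF
  set m : ℕ := max r 1 with hmdef
  have hm1 : 1 ≤ m := le_max_right r 1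
  have hrm : r ≤ m := le_max_left r 1
  -- the central blocking set has positive measure
  have htend := hxs m (by omega)
  obtain ⟨n0, hn0⟩ := (htend.eventually_ne one_ne_zero).exists
  have hBne : μ (Wset F m xs 0) ≠ 0 := by
    rw [← Bset_eq_Wset_zero]
    intro h0
    apply hn0
    have h1 : μ (centerCyl xs n0 ∩ Bset F (-(m:ℤ)) (m:ℤ) xs) = 0 :=
      le_antisymm (le_trans (measure_mono Set.inter_subset_right) h0.le) zero_le
    rw [h1, ENNReal.zero_div]
  set W : ℤ → Set (Config A) := Wset F m xs with hWdef
  have hWmeas : ∀ k, MeasurableSet (W k) := measurableSet_Wset hF.1 m xs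
  set G : Set (Config A) := {y : Config A | ∀ N : ℕ, (∃ k : ℤ, (N:ℤ) ≤ k ∧ y ∈ W k) ∧
      (∃ k : ℤ, k ≤ -(N:ℤ) ∧ y ∈ W k)} with hGdef
  have hGco : μ Gᶜ = 0 := ginf_conull hF herg m xs hBne
  -- F is measure preserving
  have hFmeas : Measurable F := hF.1.measurable
  have hFmp : MeasurePreserving F μ μ :=
    ⟨hFmeas, Measure.ext fun E hE => by rw [Measure.map_apply hFmeas hE]; exact hinv E hE⟩
  -- main argument
  intro z0 hz0
  rw [mem_closure_iff]
  intro U hU hz0U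
  obtain ⟨n, hnU⟩ := exists_centerCyl_subset hU hz0U
  have hcylpos : 0 < μ (centerCyl z0 n) :=
    hz0 _ (isOpen_centerCyl z0 n) (self_mem_centerCyl z0 n)
  set N : ℕ := n + m with hNdef
  have hcylG : μ (centerCyl z0 n ∩ G) ≠ 0 := by
    intro h0
    have hle : μ (centerCyl z0 n) ≤ 0 := by
      calc μ (centerCyl z0 n) ≤ μ (centerCyl z0 n ∩ G) + μ (centerCyl z0 n \ G) :=
            measure_le_inter_add_diff μ _ _
        _ ≤ 0 + μ Gᶜ := add_le_add h0.le (measure_mono (Set.diff_subset_compl _ _))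
        _ = 0 := by rw [hGco, add_zero]
    exact absurd (le_antisymm hle zero_le) hcylpos.ne'
  have hcover : centerCyl z0 n ∩ G ⊆
      ⋃ (a : ℕ), ⋃ (b : ℕ), (centerCyl z0 n ∩ W (-(N:ℤ) - a) ∩ W ((N:ℤ) + b)) := by
    rintro y ⟨hy1, hy2⟩
    obtain ⟨⟨k2, hk2, hw2⟩, ⟨k1, hk1, hw1⟩⟩ := hy2 N
    refine Set.mem_iUnion.mpr ⟨(-(N:ℤ) - k1).toNat, Set.mem_iUnion.mpr ⟨(k2 - N).toNat, ?_⟩⟩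
    refine ⟨⟨hy1, ?_⟩, ?_⟩
    · have he : -(N:ℤ) - ((-(N:ℤ) - k1).toNat : ℤ) = k1 := by omega
      rw [he]; exact hw1
    · have he : (N:ℤ) + ((k2 - (N:ℤ)).toNat : ℤ) = k2 := by omega
      rw [he]; exact hw2
  have hex : ∃ a b : ℕ, μ (centerCyl z0 n ∩ W (-(N:ℤ) - a) ∩ W ((N:ℤ) + b)) ≠ 0 := by
    by_contra hall
    push_neg at hall
    exact hcylG (measure_mono_null hcover
      (measure_iUnion_null fun a => measure_iUnion_null fun b => hall a b))
  obtain ⟨a, b, hDne⟩ := hex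
  set k1 : ℤ := -(N:ℤ) - a with hk1def
  set k2 : ℤ := (N:ℤ) + b with hk2def
  set p : ℤ := k2 - k1 with hpdef
  have hNn : (N:ℤ) = (n:ℤ) + (m:ℤ) := by push_cast [hNdef]; ring
  have hm1' : (1:ℤ) ≤ (m:ℤ) := by exact_mod_cast hm1
  have hk1le : k1 ≤ -(n:ℤ) - m := by omega
  have hk2ge : (n:ℤ) + m ≤ k2 := by omega
  have hp2 : 2 * (m:ℤ) ≤ p := by omega
  have hppos : 0 < p := by omega
  set pn : ℕ := p.toNat with hpndef
  have hpn : (pn:ℤ) = p := Int.toNat_of_nonneg hppos.le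
  set D0 : Set (Config A) := centerCyl z0 n ∩ W k1 ∩ W k2 with hD0def
  have hD0meas : MeasurableSet D0 :=
    ((measurableSet_centerCyl z0 n).inter (hWmeas k1)).inter (hWmeas k2)
  have hcover2 : D0 ⊆ ⋃ (u : Fin pn → A),
      (D0 ∩ {y : Config A | ∀ t : Fin pn, y (k1 + ((t:ℕ):ℤ)) = u t}) := fun y hy =>
    Set.mem_iUnion.mpr ⟨fun t => y (k1 + ((t:ℕ):ℤ)), hy, fun _ => rfl⟩
  have hexu : ∃ u : Fin pn → A,
      μ (D0 ∩ {y : Config A | ∀ t : Fin pn, y (k1 + ((t:ℕ):ℤ)) = u t}) ≠ 0 := by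
    by_contra hall
    push_neg at hall
    exact hDne (measure_mono_null hcover2 (measure_iUnion_null fun u => hall u))
  obtain ⟨u, hDu⟩ := hexu
  set Du : Set (Config A) :=
    D0 ∩ {y : Config A | ∀ t : Fin pn, y (k1 + ((t:ℕ):ℤ)) = u t} with hDudef
  have hDumeas : MeasurableSet Du := by
    refine hD0meas.inter ?_
    have he : {y : Config A | ∀ t : Fin pn, y (k1 + ((t:ℕ):ℤ)) = u t} =
        ⋂ t : Fin pn, (fun y : Config A => y (k1 + ((t:ℕ):ℤ))) ⁻¹' {u t} := by
      ext y; simp [Set.mem_iInter]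
    rw [he]
    exact MeasurableSet.iInter fun t =>
      (measurable_pi_apply _) ((isOpen_discrete ({u t} : Set A)).measurableSet)
  obtain ⟨y, hyD, q, hq0, hqD⟩ :=
    hFmp.conservative.exists_mem_iterate_mem hDumeas.nullMeasurableSet hDu
  have hycyl : y ∈ centerCyl z0 n := hyD.1.1.1
  have hwall1 : y ∈ W k1 := hyD.1.1.2
  have hwall2 : y ∈ W k2 := hyD.1.2
  have hyword : ∀ t : Fin pn, y (k1 + ((t:ℕ):ℤ)) = u t := hyD.2
  have hqword : ∀ t : Fin pn, F^[q] y (k1 + ((t:ℕ):ℤ)) = u t := hqD.2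
  -- the spatially periodic splice
  set z : Config A := fun i => y (k1 + (i - k1) % p) with hzdef
  have hzper0 : ∀ i, z (i + p) = z i := by
    intro i
    show y (k1 + (i + p - k1) % p) = y (k1 + (i - k1) % p)
    rw [show i + p - k1 = (i - k1) + p * 1 by ring, Int.add_mul_emod_self_left]
  have hzagree : ∀ i, k1 ≤ i → i < k2 → z i = y i := by
    intro i h1 h2
    show y (k1 + (i - k1) % p) = y i
    rw [Int.emod_eq_of_lt (by omega) (by omega), show k1 + (i - k1) = i by ring]
  have hzps : shiftn p z = z := funext fun i => hzper0 i
  have hzper : ∀ (j : ℕ) (i : ℤ), F^[j] z (i + p) = F^[j] z i := by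
    intro j i
    calc F^[j] z (i + p) = shiftn p (F^[j] z) i := rfl
      _ = F^[j] (shiftn p z) i := by rw [ca_iterate_shiftn hF.2]
      _ = F^[j] z i := by rw [hzps]
  have hsplice := wall_splice hloc hrm hm1 hpdef hp2 hwall1 hwall2 hzper hzagree
  -- F^[q] z = z
  have hq1 : ∀ i, k1 ≤ i → i < k2 → F^[q] z i = z i := by
    intro i h1 h2
    have e1 : F^[q] z i = F^[q] y i := hsplice q i (by omega) (by omega)
    have htb : (i - k1).toNat < pn := by omega
    set t : Fin pn := ⟨(i - k1).toNat, htb⟩ with htdef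
    have hti : k1 + ((t:ℕ):ℤ) = i := by
      have : ((t:ℕ):ℤ) = i - k1 := by simp [htdef]; omega
      omega
    have e2 : F^[q] y i = u t := by rw [← hti]; exact hqword t
    have e3 : y i = u t := by rw [← hti]; exact hyword t
    rw [e1, e2, hzagree i h1 h2, e3]
  have hfix : F^[q] z = z := periodic_ext hpdef hppos (hzper q) hzper0 hq1
  refine ⟨z, ?_, ⟨q, Nat.pos_of_ne_zero hq0, hfix⟩⟩
  apply hnU
  intro k hka hkb
  have : z k = y k := hzagree k (by omega) (by omega)
  rw [this]
  exact hycyl k hka hkb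
end

section
/- Let F be an expansive cellular automaton. Then the set of strictly temporally periodic points of F is empty. -/
open Function Set

/-- `F` is expansive: there is `m` such that distinct points are separated by some
iterate on the central window `(−m, m)`. -/
def Expansive {A : Type*} (F : Config A → Config A) : Prop :=
  ∃ m : ℕ, ∀ x y : Config A, x ≠ y →
    ∃ (n : ℕ) (k : ℤ), -(m : ℤ) ≤ k ∧ k ≤ (m : ℤ) ∧ F^[n] x k ≠ F^[n] y k

/-- `y` is strictly temporally periodic for `F`: `F`-periodic but not shift-periodic. -/
def StrictlyTempPeriodic {A : Type*} (F : Config A → Config A) (y : Config A) : Prop :=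
  (∃ p : ℕ, 0 < p ∧ F^[p] y = y) ∧ ∀ q : ℕ, 0 < q → shift^[q] y ≠ y

lemma shift_injective {A : Type*} : Function.Injective (shift (A := A)) := by
  intro x y h
  funext i
  have := congrFun h (i - 1)
  simpa [shift] using this

theorem strictly_temporally_periodic_empty_of_expansive
    {A : Type} [Fintype A] [Nonempty A] [TopologicalSpace A] [DiscreteTopology A]
    (F : Config A → Config A) (hF : IsCA F) (hexp : Expansive F) :
    {y : Config A | StrictlyTempPeriodic F y} = ∅ := by
  ext y
  simp only [mem_setOf_eq, mem_empty_iff_false, iff_false]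
  rintro ⟨⟨p, hp, hyp⟩, hnq⟩
  obtain ⟨m, hm⟩ := hexp
  have hc : Function.Commute F shift := fun x => congrFun hF.2 x
  have hcomm : ∀ n q : ℕ, ∀ x, F^[n] (shift^[q] x) = shift^[q] (F^[n] x) :=
    fun n q x => (hc.iterate_iterate n q) x
  -- every shift of y is F-periodic with period p
  have hper : ∀ q : ℕ, F^[p] (shift^[q] y) = shift^[q] y := by
    intro q
    rw [hcomm, hyp]
  -- key: two p-periodic points agreeing on the first p iterates in the window are equal
  have key : ∀ x z : Config A, F^[p] x = x → F^[p] z = z →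
      (∀ i, i < p → ∀ k : ℤ, -(m : ℤ) ≤ k → k ≤ (m : ℤ) → F^[i] x k = F^[i] z k) →
      x = z := by
    intro x z hx hz h
    by_contra hne
    obtain ⟨n, k, hk1, hk2, hne2⟩ := hm x z hne
    have hred : ∀ w : Config A, F^[p] w = w → F^[n] w = F^[n % p] w := by
      intro w hw
      have hmul : F^[p * (n / p)] w = w := by
        have : Function.IsPeriodicPt F p w := hw
        exact (this.mul_const (n / p))
      conv_lhs => rw [← Nat.div_add_mod n p]
      rw [Nat.add_comm, Function.iterate_add_apply, hmul]
    rw [hred x hx, hred z hz] at hne2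
    exact hne2 (h (n % p) (Nat.mod_lt n hp) k hk1 hk2)
  -- finiteness: the trace map on the shift orbit is eventually equal
  set g : ℕ → (Fin p → Fin (2 * m + 1) → A) :=
    fun q i j => F^[(i : ℕ)] (shift^[q] y) ((j : ℤ) - m) with hg
  obtain ⟨a, b, hab, heq⟩ := Finite.exists_ne_map_eq_of_infinite g
  -- wlog a < b
  wlog hlt : a < b generalizing a b
  · exact this b a hab.symm heq.symm (by omega)
  have hshift : shift^[a] y = shift^[b] y := by
    apply key _ _ (hper a) (hper b)
    intro i hi k hk1 hk2
    have hj : (k + m).toNat < 2 * m + 1 := by omega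
    have := congrFun (congrFun heq ⟨i, hi⟩) ⟨(k + m).toNat, hj⟩
    simp only [hg] at this
    have hk : ((((k + m).toNat : ℤ)) - m) = k := by omega
    rwa [hk] at this
  have : shift^[b] y = shift^[a] (shift^[b - a] y) := by
    rw [← Function.iterate_add_apply]
    congr 1
    omega
  rw [this] at hshift
  have := (shift_injective.iterate a) hshift
  exact hnq (b - a) (by omega) this.symm
end

section
/- Every dynamical system (X, T), where X is a nonempty compact metric space and T : X → X is continuous, possesses a maximal equicontinuous factor: there exist a compact metric space Y, a continuous map U : Y → Y with the family {U^n : n ≥ 0} equicontinuous, and a factor map π : (X, T) → (Y, U), such that for every compact metric dynamical system (Z, V) with {V^n : n ≥ 0} equicontinuous and every factor map φ : (X, T) → (Z, V) there is a unique factor map ψ : (Y, U) → (Z, V) with ψ ∘ π = φ. -/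
open Function

universe u v

/-- A maximal equicontinuous factor of the dynamical system `(X, T)`: an equicontinuous
compact metric system `(Y, U)` and a factor map `π : X → Y` such that every
equicontinuous factor of `(X, T)` factors uniquely through `π`. -/
structure MaxEquicontinuousFactor (X : Type u) [MetricSpace X] [CompactSpace X]
    [Nonempty X] (T : X → X) : Type (max (u + 1) (v + 1)) where
  Y : Type u
  [mY : MetricSpace Y]
  [cY : CompactSpace Y]
  [nY : Nonempty Y]
  U : Y → Y
  hUc : Continuous U
  hUeq : Equicontinuous fun n : ℕ => U^[n]
  π : X → Y
  hπc : Continuous π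
  hπs : Function.Surjective π
  hπcomm : π ∘ T = U ∘ π
  maximal : ∀ (Z : Type v) [MetricSpace Z] [CompactSpace Z] [Nonempty Z] (V : Z → Z),
      Continuous V → Equicontinuous (fun n : ℕ => V^[n]) →
      ∀ φ : X → Z, Continuous φ → Function.Surjective φ → φ ∘ T = V ∘ φ →
      ∃! ψ : Y → Z,
        Continuous ψ ∧ Function.Surjective ψ ∧ ψ ∘ U = V ∘ ψ ∧ ψ ∘ π = φ

section MEFAux

open Filter Topology

variable {X : Type u} [MetricSpace X]

/-- A continuous pseudometric, bounded by 1, which is non-expanded by `T`. -/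
structure GoodPseudo (T : X → X) (p : X → X → ℝ) : Prop where
  cont : Continuous fun q : X × X => p q.1 q.2
  refl : ∀ x, p x x = 0
  symm : ∀ x y, p x y = p y x
  triangle : ∀ x y z, p x z ≤ p x y + p y z
  nonneg : ∀ x y, 0 ≤ p x y
  le_one : ∀ x y, p x y ≤ 1
  contract : ∀ x y, p (T x) (T y) ≤ p x y

lemma goodPseudo_zero (T : X → X) : GoodPseudo T fun _ _ => (0 : ℝ) where
  cont := continuous_const
  refl _ := rfl
  symm _ _ := rfl
  triangle _ _ _ := by norm_num
  nonneg _ _ := le_rfl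
  le_one _ _ := by norm_num
  contract _ _ := le_rfl

/-- A "master" pseudometric for `T`: a continuous `T`-nonexpanded pseudometric whose
zero set is contained in the zero set of every good pseudometric. -/
structure Master (T : X → X) : Type u where
  D : X → X → ℝ
  cont : Continuous fun q : X × X => D q.1 q.2
  refl : ∀ x, D x x = 0
  symm : ∀ x y, D x y = D y x
  triangle : ∀ x y z, D x z ≤ D x y + D y z
  nonneg : ∀ x y, 0 ≤ D x y
  contract : ∀ x y, D (T x) (T y) ≤ D x y
  max : ∀ p, GoodPseudo T p → ∀ x y, D x y = 0 → p x y = 0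

/-- In a compact metric space every `T` admits a master pseudometric, obtained as a suitable
countable weighted sum of good pseudometrics (countability comes from second countability of
`X × X` via a Lindelöf argument). -/
lemma exists_master [CompactSpace X] (T : X → X) : Nonempty (Master T) := by
  let ι := {p : X → X → ℝ // GoodPseudo T p}
  haveI : Inhabited ι := ⟨⟨_, goodPseudo_zero T⟩⟩
  let s : ι → Set (X × X) := fun p => {q | 0 < p.1 q.1 q.2}
  have hso : ∀ i, IsOpen (s i) := fun i => isOpen_lt continuous_const i.2.cont
  obtain ⟨t, htc, hts⟩ := TopologicalSpace.isOpen_iUnion_countable s hso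
  obtain ⟨f, hf⟩ := (htc.insert default).exists_eq_range (Set.insert_nonempty _ _)
  set a : ℕ → X → X → ℝ := fun n x y => (1 / 2 : ℝ) ^ (n + 1) * (f n).1 x y with ha
  have hanonneg : ∀ n x y, 0 ≤ a n x y := fun n x y =>
    mul_nonneg (by positivity) ((f n).2.nonneg x y)
  have hable : ∀ n x y, a n x y ≤ (1 / 2 : ℝ) ^ (n + 1) := fun n x y =>
    mul_le_of_le_one_right (by positivity) ((f n).2.le_one x y)
  have hsummg : Summable fun n : ℕ => (1 / 2 : ℝ) ^ (n + 1) := by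
    simpa [pow_succ] using summable_geometric_two.mul_right (1 / 2 : ℝ)
  have hsumm : ∀ x y, Summable fun n => a n x y := fun x y =>
    Summable.of_nonneg_of_le (fun n => hanonneg n x y) (fun n => hable n x y) hsummg
  refine ⟨⟨fun x y => ∑' n, a n x y, ?_, ?_, ?_, ?_, ?_, ?_, ?_⟩⟩
  · exact continuous_tsum
      (fun n => continuous_const.mul ((f n).2.cont)) hsummg
      (fun n q => by
        rw [Real.norm_eq_abs, abs_of_nonneg (hanonneg n q.1 q.2)]; exact hable n q.1 q.2)
  · intro x
    have : ∀ n, a n x x = 0 := fun n => by simp [ha, (f n).2.refl]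
    simp [this]
  · intro x y
    exact tsum_congr fun n => by simp [ha, (f n).2.symm x y]
  · intro x y z
    calc ∑' n, a n x z ≤ ∑' n, (a n x y + a n y z) := by
          refine Summable.tsum_le_tsum (fun n => ?_) (hsumm x z) ((hsumm x y).add (hsumm y z))
          rw [ha]
          dsimp only
          rw [← mul_add]
          exact mul_le_mul_of_nonneg_left ((f n).2.triangle x y z) (by positivity)
      _ = (∑' n, a n x y) + ∑' n, a n y z := Summable.tsum_add (hsumm x y) (hsumm y z)
  · exact fun x y => tsum_nonneg fun n => hanonneg n x y
  · intro x y
    refine Summable.tsum_le_tsum (fun n => ?_) (hsumm (T x) (T y)) (hsumm x y)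
    exact mul_le_mul_of_nonneg_left ((f n).2.contract x y) (by positivity)
  · intro p hp x y hD
    have hterm : ∀ n, a n x y = 0 := by
      intro n
      refine le_antisymm ?_ (hanonneg n x y)
      rw [← hD]
      exact Summable.le_tsum (hsumm x y) n fun m _ => hanonneg m x y
    have hfn : ∀ n, (f n).1 x y = 0 := by
      intro n
      have := hterm n
      rw [ha] at this
      dsimp only at this
      rcases mul_eq_zero.1 this with h | h
      · exact absurd h (by positivity)
      · exact h
    by_contra hne
    have hpos : 0 < p x y := lt_of_le_of_ne (hp.nonneg x y) (Ne.symm hne)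
    have hmem : (x, y) ∈ ⋃ i, s i := Set.mem_iUnion.2 ⟨⟨p, hp⟩, hpos⟩
    rw [← hts] at hmem
    obtain ⟨i, hit, hi⟩ := Set.mem_iUnion₂.1 hmem
    have : i ∈ Set.range f := by rw [← hf]; exact Set.mem_insert_of_mem _ hit
    obtain ⟨n, rfl⟩ := this
    exact absurd (hfn n) (ne_of_gt hi)

/-- The pullback of an equicontinuous system along a factor map gives a good pseudometric
whose zero set refines the fibers of the factor map. -/
lemma goodPseudo_pullback {Z : Type v} [MetricSpace Z] [CompactSpace Z]
    (T : X → X) (V : Z → Z) (hVeq : Equicontinuous fun n : ℕ => V^[n])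
    (φ : X → Z) (hφc : Continuous φ) (hφcomm : φ ∘ T = V ∘ φ) :
    ∃ p : X → X → ℝ, GoodPseudo T p ∧ ∀ x y, p x y = 0 → φ x = φ y := by
  have hmin_add : ∀ b c : ℝ, 0 ≤ b → 0 ≤ c → ∀ a : ℝ, a ≤ b + c →
      min a 1 ≤ min b 1 + min c 1 := by
    intro b c hb hc a habc
    rcases le_total b 1 with hb1 | hb1
    · rcases le_total c 1 with hc1 | hc1
      · rw [min_eq_left hb1, min_eq_left hc1]
        exact (min_le_left a 1).trans habc
      · rw [min_eq_right hc1]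
        have : min a 1 ≤ 1 := min_le_right _ _
        have h0 : 0 ≤ min b 1 := le_min hb zero_le_one
        linarith
    · rw [min_eq_right hb1]
      have : min a 1 ≤ 1 := min_le_right _ _
      have h0 : 0 ≤ min c 1 := le_min hc zero_le_one
      linarith
  set m : ℕ → X → X → ℝ := fun n x y => min (dist (V^[n] (φ x)) (V^[n] (φ y))) 1 with hm
  have hmnonneg : ∀ n x y, 0 ≤ m n x y := fun n x y => le_min dist_nonneg zero_le_one
  have hb : ∀ x y, BddAbove (Set.range fun n => m n x y) := fun x y =>
    ⟨1, by rintro r ⟨n, rfl⟩; exact min_le_right _ _⟩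
  set p : X → X → ℝ := fun x y => ⨆ n, m n x y with hp
  have psymm : ∀ x y, p x y = p y x := fun x y => by
    simp only [hp, hm, dist_comm]
  have prefl : ∀ x, p x x = 0 := fun x => by
    simp only [hp, hm, dist_self]
    norm_num
  have pnonneg : ∀ x y, 0 ≤ p x y := fun x y =>
    (hmnonneg 0 x y).trans (le_ciSup (hb x y) 0)
  have ple_one : ∀ x y, p x y ≤ 1 := fun x y => ciSup_le fun n => min_le_right _ _
  have ptri : ∀ x y z, p x z ≤ p x y + p y z := by
    intro x y z
    refine ciSup_le fun n => ?_
    have h1 : m n x y ≤ p x y := le_ciSup (hb x y) n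
    have h2 : m n y z ≤ p y z := le_ciSup (hb y z) n
    have : m n x z ≤ m n x y + m n y z :=
      hmin_add _ _ dist_nonneg dist_nonneg _ (dist_triangle _ _ _)
    linarith
  have pcontract : ∀ x y, p (T x) (T y) ≤ p x y := by
    intro x y
    refine ciSup_le fun n => ?_
    have hx : φ (T x) = V (φ x) := congrFun hφcomm x
    have hy : φ (T y) = V (φ y) := congrFun hφcomm y
    have : m n (T x) (T y) = m (n + 1) x y := by
      simp only [hm, hx, hy, Function.iterate_succ_apply]
    rw [this]
    exact le_ciSup (hb x y) (n + 1)
  -- uniform equicontinuity and continuity of p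
  have hUE := CompactSpace.uniformEquicontinuous_of_equicontinuous hVeq
  rw [Metric.uniformEquicontinuous_iff] at hUE
  have psmall : ∀ ε > (0 : ℝ), ∃ δ > (0 : ℝ), ∀ x y : X, dist (φ x) (φ y) < δ → p x y ≤ ε := by
    intro ε hε
    obtain ⟨δ, hδ, hδ'⟩ := hUE ε hε
    refine ⟨δ, hδ, fun x y h => ciSup_le fun n => ?_⟩
    exact (min_le_left _ _).trans (le_of_lt (hδ' _ _ h n))
  have pabs : ∀ x y x' y' : X, |p x y - p x' y'| ≤ p x x' + p y y' := by
    intro x y x' y'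
    rw [abs_le]
    constructor
    · have h1 : p x' y' ≤ p x' x + p x y + p y y' := by
        have := ptri x' x y'
        have := ptri x y y'
        linarith
      have := psymm x' x
      linarith
    · have h1 : p x y ≤ p x x' + p x' y' + p y' y := by
        have := ptri x x' y
        have := ptri x' y' y
        linarith
      have := psymm y' y
      linarith
  have pcont : Continuous fun q : X × X => p q.1 q.2 := by
    rw [continuous_iff_continuousAt]
    rintro ⟨x₀, y₀⟩
    rw [ContinuousAt, Metric.tendsto_nhds]
    intro ε hε
    obtain ⟨δ, hδ, hδ'⟩ := psmall (ε / 3) (by positivity)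
    have tx : Tendsto (fun q : X × X => dist (φ q.1) (φ x₀)) (𝓝 (x₀, y₀)) (𝓝 0) := by
      have := ((hφc.comp continuous_fst).tendsto (x₀, y₀)).dist
        (tendsto_const_nhds (f := nhds (x₀, y₀)) (x := φ x₀))
      simpa using this
    have ty : Tendsto (fun q : X × X => dist (φ q.2) (φ y₀)) (𝓝 (x₀, y₀)) (𝓝 0) := by
      have := ((hφc.comp continuous_snd).tendsto (x₀, y₀)).dist
        (tendsto_const_nhds (f := nhds (x₀, y₀)) (x := φ y₀))
      simpa using this
    filter_upwards [tx (Iio_mem_nhds hδ), ty (Iio_mem_nhds hδ)] with q h1 h2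
    have e1 : p q.1 x₀ ≤ ε / 3 := hδ' _ _ h1
    have e2 : p q.2 y₀ ≤ ε / 3 := hδ' _ _ h2
    have := pabs q.1 q.2 x₀ y₀
    rw [Real.dist_eq]
    calc |p q.1 q.2 - p x₀ y₀| ≤ p q.1 x₀ + p q.2 y₀ := this
      _ ≤ ε / 3 + ε / 3 := add_le_add e1 e2
      _ < ε := by linarith
  refine ⟨p, ⟨pcont, prefl, psymm, ptri, pnonneg, ple_one, pcontract⟩, ?_⟩
  intro x y h
  have h0 : m 0 x y ≤ 0 := h ▸ le_ciSup (hb x y) 0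
  have h0' : m 0 x y = 0 := le_antisymm h0 (hmnonneg 0 x y)
  have : min (dist (φ x) (φ y)) 1 = 0 := by simpa [hm] using h0'
  rcases le_total (dist (φ x) (φ y)) 1 with hle | hle
  · rw [min_eq_left hle] at this
    exact dist_eq_zero.1 this
  · rw [min_eq_right hle] at this
    norm_num at this

namespace Master

variable {T : X → X} (M : Master T)

/-- The quotient of `X` by the zero set of the master pseudometric. -/
def sd : Setoid X :=
  ⟨fun x y => M.D x y = 0,
    ⟨M.refl, fun {x y} h => by rw [M.symm]; exact h,
     fun {x y z} h1 h2 => le_antisymm (by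
        have := M.triangle x y z
        rw [h1, h2] at this
        linarith) (M.nonneg x z)⟩⟩

/-- The maximal equicontinuous factor as a type: the quotient of `X`. -/
def Q : Type u := Quotient M.sd

lemma dist_le_of_rel {a₁ b₁ a₂ b₂ : X} (h1 : M.D a₁ a₂ = 0) (h2 : M.D b₁ b₂ = 0) :
    M.D a₁ b₁ ≤ M.D a₂ b₂ := by
  have t1 := M.triangle a₁ a₂ b₁
  have t2 := M.triangle a₂ b₂ b₁
  have hs := M.symm b₂ b₁
  rw [h1] at t1
  rw [hs, h2] at t2
  linarith

/-- The induced distance on the quotient. -/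
def qdist : M.Q → M.Q → ℝ :=
  Quotient.lift₂ M.D fun a₁ b₁ a₂ b₂ h1 h2 =>
    le_antisymm (M.dist_le_of_rel h1 h2)
      (M.dist_le_of_rel (by rw [M.symm]; exact h1) (by rw [M.symm]; exact h2))

instance metric : MetricSpace M.Q where
  dist := M.qdist
  dist_self a := Quotient.inductionOn a fun x => M.refl x
  dist_comm a b := Quotient.inductionOn₂ a b fun x y => M.symm x y
  dist_triangle a b c := Quotient.inductionOn₃ a b c fun x y z => M.triangle x y z
  eq_of_dist_eq_zero {a b} := Quotient.inductionOn₂ a b fun x y h => Quotient.sound h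

/-- The quotient map. -/
def pr : X → M.Q := Quotient.mk M.sd

lemma pr_surjective : Function.Surjective M.pr := fun a =>
  Quotient.inductionOn a fun x => ⟨x, rfl⟩

lemma dist_pr (x y : X) : dist (M.pr x) (M.pr y) = M.D x y := rfl

lemma pr_continuous : Continuous M.pr := by
  rw [continuous_iff_continuousAt]
  intro x
  rw [ContinuousAt, Metric.tendsto_nhds]
  intro ε hε
  have hg : Continuous fun y => M.D y x :=
    M.cont.comp (continuous_id.prodMk continuous_const)
  have ht : Tendsto (fun y => M.D y x) (𝓝 x) (𝓝 0) := by
    have := hg.tendsto x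
    rwa [M.refl x] at this
  filter_upwards [ht (Iio_mem_nhds hε)] with y hy
  calc dist (M.pr y) (M.pr x) = M.D y x := rfl
    _ < ε := hy

lemma compactQ [CompactSpace X] : CompactSpace M.Q := by
  constructor
  have : Set.range M.pr = Set.univ := Set.range_eq_univ.2 M.pr_surjective
  rw [← this]
  exact isCompact_range M.pr_continuous

/-- The induced map on the quotient. -/
def U : M.Q → M.Q :=
  Quotient.lift (fun x => M.pr (T x)) fun a b h => by
    refine Quotient.sound ?_
    have hc := M.contract a b
    have : M.D a b = 0 := h
    exact le_antisymm (by rw [← this]; exact hc) (M.nonneg _ _)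

lemma dist_U_le (a b : M.Q) : dist (M.U a) (M.U b) ≤ dist a b :=
  Quotient.inductionOn₂ a b fun x y => M.contract x y

lemma U_lipschitz : LipschitzWith 1 M.U :=
  LipschitzWith.of_dist_le_mul fun a b => by
    rw [NNReal.coe_one, one_mul]; exact M.dist_U_le a b

lemma U_continuous : Continuous M.U := M.U_lipschitz.continuous

lemma dist_U_iterate (n : ℕ) (a b : M.Q) : dist (M.U^[n] a) (M.U^[n] b) ≤ dist a b := by
  induction n with
  | zero => simp
  | succ k ih =>
    rw [Function.iterate_succ_apply', Function.iterate_succ_apply']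
    exact (M.dist_U_le _ _).trans ih

lemma U_equicontinuous : Equicontinuous fun n : ℕ => M.U^[n] :=
  Metric.equicontinuous_of_continuity_modulus id tendsto_id _
    fun a b n => M.dist_U_iterate n a b

lemma pr_comm : M.pr ∘ T = M.U ∘ M.pr := rfl

end Master

end MEFAux

theorem exists_maximal_equicontinuous_factor (X : Type u) [MetricSpace X]
    [CompactSpace X] [Nonempty X] (T : X → X) (hT : Continuous T) :
    Nonempty (MaxEquicontinuousFactor.{u, v} X T) := by
  obtain ⟨M⟩ := exists_master T
  haveI : CompactSpace M.Q := M.compactQ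
  haveI : Nonempty M.Q := Nonempty.map M.pr ‹Nonempty X›
  refine ⟨{ Y := M.Q, U := M.U, hUc := M.U_continuous, hUeq := M.U_equicontinuous,
            π := M.pr, hπc := M.pr_continuous, hπs := M.pr_surjective,
            hπcomm := M.pr_comm, maximal := ?_ }⟩
  intro Z _ _ _ V hVc hVeq φ hφc hφs hφcomm
  obtain ⟨p, hp, hp0⟩ := goodPseudo_pullback T V hVeq φ hφc hφcomm
  have hwd : ∀ a b : X, M.D a b = 0 → φ a = φ b := fun a b h =>
    hp0 a b (M.max p hp a b h)
  let ψ : M.Q → Z := Quotient.lift φ hwd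
  have hψπ : ψ ∘ M.pr = φ := rfl
  have hπqm : Topology.IsQuotientMap M.pr :=
    (M.pr_continuous.isClosedMap).isQuotientMap M.pr_continuous M.pr_surjective
  refine ⟨ψ, ⟨?_, ?_, ?_, hψπ⟩, ?_⟩
  · rw [hπqm.continuous_iff]
    exact hφc
  · intro z
    obtain ⟨x, rfl⟩ := hφs z
    exact ⟨M.pr x, rfl⟩
  · funext a
    refine Quotient.inductionOn a fun x => ?_
    show ψ (M.U (M.pr x)) = V (ψ (M.pr x))
    have : M.U (M.pr x) = M.pr (T x) := rfl
    rw [this]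
    show φ (T x) = V (φ x)
    exact congrFun hφcomm x
  · rintro ψ' ⟨-, -, -, h4⟩
    funext a
    refine Quotient.inductionOn a fun x => ?_
    have h1 : ψ' (M.pr x) = φ x := congrFun h4 x
    have h2 : ψ (M.pr x) = φ x := rfl
    rw [show (Quotient.mk M.sd x : M.Q) = M.pr x from rfl]
    rw [h1, h2]
end
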